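/- arXiv:math/0701894 — 8 statements merged into one kernel-verified Lean document; each statement's English description precedes it below -/
import Mathlib

section
/- Let σ ≥ 1 be a real number. The following three conditions are equivalent: (i) limsup_{n→∞} ‖G_n‖^{1/n} ≤ σ; (ii) for every j = 0, …, μ−1, |θ_j| ≤ σ^{μ−j}; (iii) for every n ≥ 1, ‖G_n‖ ≤ σ^{n+μ−1}. -/
/-!
Write `D` for the differential operator whose matrices in the cyclic basis `e₀, …, e_{μ-1}` are
the `G n`, and `D⁰ = 1`.

(ii) ⇒ (iii): in the weighted norm `max ‖vᵢ‖ σⁱ` the companion matrix `G 1` has norm at most `σ`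
and `∂` does not increase norms, so by the ultrametric inequality `‖G n i j‖ σⁱ ≤ σⁿ σʲ`.
(iii) ⇒ (i) is immediate.

(i) ⇒ (ii): let `aₙ` be the coordinates of `Dⁿ e₀` (the first column of `G n`), and `r < 1/σ`.
Unwinding the recursion along the diagonals gives, for the generating series `B = ∑ aₙ(μ-1) Xⁿ`
and `Aₗ = ∑ aₙ(l) Xⁿ`, the identity `q B = X^(μ-1) + ∑ₗ X^(μ-l) ∂Aₗ` with
`q = 1 - ∑ θₗ X^(μ-l)`. By (i) the coefficients of `B` tend to `0` at radius `r`, so the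
`r`-Gauss norm is multiplicative on `q B`, while every `∂`-term on the right has Gauss norm
at most `r · max (r^(μ-1), |q| |B|)`. As `|B| ≥ r^(μ-1)` and `r < 1`, this forces `|q| ≤ 1`, i.e.
`‖θₗ‖ r^(μ-l) ≤ 1`, and letting `r → 1/σ` gives (ii).
-/

open Filter Topology

section NthRoot

variable {x : ℕ → ℝ} {K σ : ℝ}

lemma tendsto_mul_pow_rpow_inv (hK : 0 < K) (hσ : 0 ≤ σ) :
    Tendsto (fun n : ℕ => (K * σ ^ n) ^ (n : ℝ)⁻¹) atTop (𝓝 σ) := by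
  have hK1 : Tendsto (fun n : ℕ => K ^ (n : ℝ)⁻¹) atTop (𝓝 1) := by
    simpa [Function.comp_def] using (Real.continuousAt_const_rpow hK.ne').tendsto.comp
      (tendsto_inv_atTop_nhds_zero_nat (𝕜 := ℝ))
  refine (by simpa using hK1.mul_const σ : Tendsto _ _ (𝓝 σ)).congr' ?_
  filter_upwards [eventually_ne_atTop 0] with n hn
  rw [Real.mul_rpow hK.le (pow_nonneg hσ n), Real.pow_rpow_inv_natCast hσ hn]

lemma eventually_rpow_inv_le_of_le_mul_pow (hx : ∀ n, 0 ≤ x n)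
    (h : ∀ᶠ n in atTop, x n ≤ K * σ ^ n) :
    ∀ᶠ n in atTop, x n ^ (n : ℝ)⁻¹ ≤ (K * σ ^ n) ^ (n : ℝ)⁻¹ := by
  filter_upwards [h] with n hn
  exact Real.rpow_le_rpow (hx n) hn (by positivity)

lemma isBoundedUnder_rpow_inv_of_le_mul_pow (hx : ∀ n, 0 ≤ x n) (hK : 0 < K) (hσ : 0 ≤ σ)
    (h : ∀ᶠ n in atTop, x n ≤ K * σ ^ n) :
    IsBoundedUnder (· ≤ ·) atTop (fun n => x n ^ (n : ℝ)⁻¹) :=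
  (tendsto_mul_pow_rpow_inv hK hσ).isBoundedUnder_le.mono_le
    (eventually_rpow_inv_le_of_le_mul_pow hx h)

lemma limsup_rpow_inv_le_of_le_mul_pow (hx : ∀ n, 0 ≤ x n) (hK : 0 < K) (hσ : 0 ≤ σ)
    (h : ∀ᶠ n in atTop, x n ≤ K * σ ^ n) :
    limsup (fun n => x n ^ (n : ℝ)⁻¹) atTop ≤ σ := by
  have hlim := tendsto_mul_pow_rpow_inv hK hσ
  calc limsup (fun n => x n ^ (n : ℝ)⁻¹) atTop
      ≤ limsup (fun n : ℕ => (K * σ ^ n) ^ (n : ℝ)⁻¹) atTop :=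
        limsup_le_limsup (eventually_rpow_inv_le_of_le_mul_pow hx h)
          (isBoundedUnder_of ⟨0, fun n => Real.rpow_nonneg (hx n) _⟩).isCoboundedUnder_le
          hlim.isBoundedUnder_le
    _ = σ := hlim.limsup_eq

lemma eventually_le_pow_of_limsup_rpow_inv_lt {τ : ℝ} (hx : ∀ n, 0 ≤ x n)
    (hbdd : IsBoundedUnder (· ≤ ·) atTop (fun n => x n ^ (n : ℝ)⁻¹))
    (h : limsup (fun n => x n ^ (n : ℝ)⁻¹) atTop < τ) :
    ∀ᶠ n in atTop, x n ≤ τ ^ n := by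
  filter_upwards [eventually_lt_of_limsup_lt h hbdd, eventually_ne_atTop 0] with n hlt hn
  rw [← Real.rpow_inv_natCast_pow (hx n) hn]
  exact pow_le_pow_left₀ (Real.rpow_nonneg (hx n) _) hlt.le n

end NthRoot

lemma exists_forall_le_and_forall_lt_of_tendsto_zero {w : ℕ → ℝ} (hw : Tendsto w atTop (𝓝 0))
    (hpos : ∃ n, 0 < w n) : ∃ n, (∀ m, w m ≤ w n) ∧ ∀ m, n < m → w m < w n := by
  obtain ⟨n₁, hn₁⟩ := hpos
  obtain ⟨N, hN⟩ := eventually_atTop.1 (hw.eventually (gt_mem_nhds hn₁))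
  have hn₁N : n₁ ∈ Finset.range N := Finset.mem_range.2 (not_le.1 fun h => (hN n₁ h).false)
  -- maximizing `(w m, m)` lexicographically picks the last index where the maximum is attained
  obtain ⟨n, hnN, hmax⟩ := (Finset.range N).exists_max_image (fun m => toLex (w m, m)) ⟨n₁, hn₁N⟩
  have hlex : ∀ m < N, w m < w n ∨ w m = w n ∧ m ≤ n := fun m hm =>
    Prod.Lex.le_iff.1 (hmax m (Finset.mem_range.2 hm))
  have htail : ∀ m, N ≤ m → w m < w n := fun m hm =>
    (hN m hm).trans_le <| (hlex n₁ (Finset.mem_range.1 hn₁N)).elim le_of_lt (fun h => h.1.le)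
  refine ⟨n, fun m => ?_, fun m hm => ?_⟩
  · rcases lt_or_ge m N with h | h
    · exact (hlex m h).elim le_of_lt (fun h => h.1.le)
    · exact (htail m h).le
  · rcases lt_or_ge m N with h | h
    · exact (hlex m h).resolve_right (fun h => by omega)
    · exact htail m h

section GaussNorm

open PowerSeries Finset.HasAntidiagonal

variable {F : Type*} [NormedField F] [IsUltrametricDist F] {r : ℝ}

lemma PowerSeries.gaussNorm_eq_of_forall_le {R : Type*} [Semiring R] {v : R → ℝ} {f : R⟦X⟧}
    {k : ℕ} (hk : ∀ m, v (coeff m f) * r ^ m ≤ v (coeff k f) * r ^ k) :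
    gaussNorm v r f = v (coeff k f) * r ^ k := by
  rw [gaussNorm_eq]
  exact le_antisymm (ciSup_le hk) (le_ciSup ⟨_, Set.forall_mem_range.2 hk⟩ k)

theorem PowerSeries.exists_norm_coeff_mul_eq_gaussNorm_mul (hr : 0 < r) {f g : F⟦X⟧}
    (hf : Tendsto (fun n => ‖coeff n f‖ * r ^ n) atTop (𝓝 0))
    (hg : Tendsto (fun n => ‖coeff n g‖ * r ^ n) atTop (𝓝 0)) :
    ∃ N, ‖coeff N (f * g)‖ * r ^ N = gaussNorm (‖·‖) r f * gaussNorm (‖·‖) r g := by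
  rcases eq_or_ne f 0 with rfl | hf0
  · exact ⟨0, by simp⟩
  rcases eq_or_ne g 0 with rfl | hg0
  · exact ⟨0, by simp⟩
  have exists_pos : ∀ h : F⟦X⟧, h ≠ 0 → ∃ n, 0 < ‖coeff n h‖ * r ^ n := fun h hh =>
    (exists_coeff_ne_zero_iff_ne_zero.2 hh).imp fun n hn =>
      mul_pos (norm_pos_iff.2 hn) (pow_pos hr n)
  obtain ⟨i, hi_max, hi_last⟩ :=
    exists_forall_le_and_forall_lt_of_tendsto_zero hf (exists_pos f hf0)
  obtain ⟨j, hj_max, hj_last⟩ :=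
    exists_forall_le_and_forall_lt_of_tendsto_zero hg (exists_pos g hg0)
  have hipos : 0 < ‖coeff i f‖ * r ^ i :=
    (exists_pos f hf0).elim fun n hn => hn.trans_le (hi_max n)
  have hjpos : 0 < ‖coeff j g‖ * r ^ j :=
    (exists_pos g hg0).elim fun n hn => hn.trans_le (hj_max n)
  have hdom : ∀ p ∈ antidiagonal (i + j), p ≠ (i, j) →
      ‖coeff p.1 f * coeff p.2 g‖ < ‖coeff i f * coeff j g‖ := by
    rintro ⟨p₁, p₂⟩ hp hne
    rw [mem_antidiagonal] at hp
    rw [← mul_lt_mul_iff_of_pos_right (pow_pos hr (i + j)), norm_mul, norm_mul]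
    have key : ∀ a b, a + b = i + j → ‖coeff a f‖ * ‖coeff b g‖ * r ^ (i + j) =
        (‖coeff a f‖ * r ^ a) * (‖coeff b g‖ * r ^ b) := fun a b hab => by
      rw [← hab, pow_add]; ring
    rw [key p₁ p₂ hp, key i j rfl]
    rcases lt_trichotomy p₁ i with h | h | h
    · exact mul_lt_mul' (hi_max p₁) (hj_last p₂ (by omega)) (by positivity) hipos
    · exact absurd (Prod.ext h (by simp at hp ⊢; omega)) hne
    · exact (mul_le_mul_of_nonneg_left (hj_max p₂) (by positivity)).trans_lt
        (mul_lt_mul_of_pos_right (hi_last p₁ h) hjpos)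
  refine ⟨i + j, ?_⟩
  rw [gaussNorm_eq_of_forall_le hi_max, gaussNorm_eq_of_forall_le hj_max, coeff_mul,
    IsUltrametricDist.isNonarchimedean_norm.apply_sum_eq_of_lt (fun x => (norm_neg x).symm)
      (k := (i, j)) (mem_antidiagonal.2 rfl) hdom, norm_mul, pow_add]
  ring

end GaussNorm

section Ultrametric

variable {F : Type*} [NormedField F] [IsUltrametricDist F] {c M : ℝ}

lemma norm_add_mul_le_of_le (hc : 0 ≤ c) {x y : F} (hx : ‖x‖ * c ≤ M) (hy : ‖y‖ * c ≤ M) :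
    ‖x + y‖ * c ≤ M :=
  (mul_le_mul_of_nonneg_right (IsUltrametricDist.norm_add_le_max x y) hc).trans
    (by rw [max_mul_of_nonneg _ _ hc]; exact max_le hx hy)

lemma norm_sum_mul_le_of_le {ι : Type*} {s : Finset ι} {x : ι → F} (hc : 0 ≤ c) (hM : 0 ≤ M)
    (hx : ∀ i ∈ s, ‖x i‖ * c ≤ M) : ‖∑ i ∈ s, x i‖ * c ≤ M :=
  Finset.sum_induction x (fun y => ‖y‖ * c ≤ M) (fun _ _ => norm_add_mul_le_of_le hc)
    (by simpa using hM) hx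

end Ultrametric

theorem norm_apply_mul_le_pow_mul {ι F : Type*} [Fintype ι] [DecidableEq ι] [NormedField F]
    [IsUltrametricDist F] {dd : F → F} (hdd : ∀ f, ‖dd f‖ ≤ ‖f‖) {M : Matrix ι ι F}
    {H : ℕ → Matrix ι ι F} (h0 : H 0 = 1) (hsucc : ∀ n, H (n + 1) = M * H n + (H n).map dd)
    {ω : ι → ℝ} {σ : ℝ} (hω : ∀ i, 0 ≤ ω i) (hσ : 1 ≤ σ) (hM : ∀ i k, ‖M i k‖ * ω i ≤ σ * ω k)
    (n : ℕ) (i j : ι) : ‖H n i j‖ * ω i ≤ σ ^ n * ω j := by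
  induction n generalizing i with
  | zero =>
    rw [h0, pow_zero, one_mul, Matrix.one_apply]
    split_ifs with h
    · rw [norm_one, one_mul, h]
    · rw [norm_zero, zero_mul]; exact hω j
  | succ n ih =>
    rw [hsucc, Matrix.add_apply, Matrix.mul_apply, Matrix.map_apply]
    have hσ0 : 0 ≤ σ := zero_le_one.trans hσ
    refine norm_add_mul_le_of_le (hω i)
      (norm_sum_mul_le_of_le (hω i) (by have := hω j; positivity) fun k _ => ?_) ?_
    · calc ‖M i k * H n k j‖ * ω i = (‖M i k‖ * ω i) * ‖H n k j‖ := by rw [norm_mul]; ring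
        _ ≤ (σ * ω k) * ‖H n k j‖ := mul_le_mul_of_nonneg_right (hM i k) (norm_nonneg _)
        _ = σ * (‖H n k j‖ * ω k) := by ring
        _ ≤ σ * (σ ^ n * ω j) := mul_le_mul_of_nonneg_left (ih k) hσ0
        _ = σ ^ (n + 1) * ω j := by ring
    · calc ‖dd (H n i j)‖ * ω i ≤ ‖H n i j‖ * ω i := mul_le_mul_of_nonneg_right (hdd _) (hω i)
        _ ≤ σ ^ n * ω j := ih i
        _ ≤ σ ^ (n + 1) * ω j :=
          mul_le_mul_of_nonneg_right (pow_le_pow_right₀ hσ n.le_succ) (hω j)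

section CompanionOrbit

open PowerSeries

/-- `a n i` (for `i < μ`) are the coordinates of `Dⁿ e₀` in the cyclic basis `eᵢ = Dⁱ e₀` of a
differential operator `D` with `D (∑ fᵢ eᵢ) = ∑ (dd fᵢ) eᵢ + fᵢ D eᵢ` and
`D e_{μ-1} = ∑ θᵢ eᵢ`. -/
structure IsCompanionOrbit {R : Type*} [Semiring R] (dd : R → R) (μ : ℕ) (θ : ℕ → R)
    (a : ℕ → ℕ → R) : Prop where
  intro ::
  zero : ∀ i < μ, a 0 i = if i = 0 then 1 else 0
  succ : ∀ n, ∀ i < μ,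
    a (n + 1) i = (if i = 0 then 0 else a n (i - 1)) + θ i * a n (μ - 1) + dd (a n i)

/-- The reversed characteristic polynomial `1 - ∑ θₗ X^(μ-l)` of the companion matrix. -/
noncomputable def companionSeries {R : Type*} [Ring R] (μ : ℕ) (θ : ℕ → R) : R⟦X⟧ :=
  1 - ∑ l ∈ Finset.range μ, C (θ l) * X ^ (μ - l)

section Ring

variable {R : Type*} [Ring R] {μ : ℕ} {θ : ℕ → R}

lemma coeff_companionSeries_sub {l : ℕ} (hl : l < μ) :
    coeff (μ - l) (companionSeries μ θ) = -θ l := by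
  rw [companionSeries, map_sub, map_sum, coeff_one, if_neg (by omega), zero_sub, neg_inj,
    Finset.sum_eq_single_of_mem l (Finset.mem_range.2 hl)]
  · simp
  · intro k hk hkl
    rw [Finset.mem_range] at hk
    simp [coeff_X_pow, show μ - l ≠ μ - k by omega]

lemma coeff_companionSeries_of_lt {m : ℕ} (hm : μ < m) : coeff m (companionSeries μ θ) = 0 := by
  have hk : ∀ k ∈ Finset.range μ, m ≠ μ - k := fun k _ => by omega
  simp [companionSeries, coeff_X_pow, Finset.sum_ite_of_false hk, show m ≠ 0 by omega]

end Ring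

namespace IsCompanionOrbit

section Semiring

variable {R : Type*} [Semiring R] {dd : R → R} {μ : ℕ} {θ : ℕ → R} {a : ℕ → ℕ → R}

lemma eq_of_lt (ha : IsCompanionOrbit dd μ θ a) (hdd0 : dd 0 = 0) (hdd1 : dd 1 = 0) :
    ∀ n < μ, ∀ i < μ, a n i = if i = n then 1 else 0 := by
  intro n
  induction n with
  | zero => exact fun _ => ha.zero
  | succ n ih =>
    intro hn i hi
    rw [ha.succ n i hi, ih (by omega) (μ - 1) (by omega), if_neg (show μ - 1 ≠ n by omega),
      mul_zero, add_zero, ih (by omega) i hi, apply_ite dd, hdd1, hdd0, ite_self, add_zero]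
    rcases Nat.eq_zero_or_pos i with rfl | hi0
    · simp
    · rw [if_neg hi0.ne', ih (by omega) (i - 1) (by omega)]
      exact if_congr (by omega) rfl rfl

lemma mk_eq (ha : IsCompanionOrbit dd μ θ a) :
    ∀ i < μ, mk (fun n => a n i) = X ^ i + ∑ l ∈ Finset.range (i + 1),
      X ^ (i + 1 - l) * (C (θ l) * mk (fun n => a n (μ - 1)) + mk (fun n => dd (a n l))) := by
  have hstep : ∀ i < μ, mk (fun n => a n i) =
      (if i = 0 then 1 else X * mk (fun n => a n (i - 1)))
        + X * (C (θ i) * mk (fun n => a n (μ - 1)) + mk (fun n => dd (a n i))) := by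
    intro i hi
    ext n
    rcases n with _ | n
    · rw [coeff_mk, ha.zero i hi]; split_ifs <;> simp
    · rw [coeff_mk, ha.succ n i hi]; split_ifs <;> simp [coeff_succ_X_mul, add_assoc]
  intro i
  induction i with
  | zero => intro h; simp [hstep 0 h]
  | succ i ih =>
    intro hi
    rw [hstep (i + 1) hi, if_neg i.succ_ne_zero, Nat.add_sub_cancel, ih (by omega),
      Finset.sum_range_succ (n := i + 1), mul_add, Finset.mul_sum, Nat.add_sub_cancel_left,
      pow_succ' X i, pow_one, ← add_assoc]
    congr 2
    refine Finset.sum_congr rfl fun l hl => ?_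
    rw [← mul_assoc, ← pow_succ', show i + 1 + 1 - l = i + 1 - l + 1 by grind]

end Semiring

lemma companionSeries_mul {R : Type*} [CommRing R] {dd : R → R} {μ : ℕ} {θ : ℕ → R}
    {a : ℕ → ℕ → R} (ha : IsCompanionOrbit dd μ θ a) (hμ : 0 < μ) :
    companionSeries μ θ * mk (fun n => a n (μ - 1)) =
      X ^ (μ - 1) + ∑ l ∈ Finset.range μ, X ^ (μ - l) * mk (fun n => dd (a n l)) := by
  set B := mk fun n => a n (μ - 1) with hB
  have h := ha.mk_eq (μ - 1) (by omega)
  rw [← hB, Nat.sub_add_cancel hμ] at h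
  simp only [mul_add, Finset.sum_add_distrib] at h
  have hswap : ∑ l ∈ Finset.range μ, X ^ (μ - l) * (C (θ l) * B) =
      ∑ l ∈ Finset.range μ, C (θ l) * X ^ (μ - l) * B :=
    Finset.sum_congr rfl fun l _ => by ring
  rw [companionSeries, sub_mul, one_mul, Finset.sum_mul, ← hswap]
  nth_rewrite 1 [h]
  abel

variable {F : Type*} [NormedField F] [IsUltrametricDist F] {dd : F → F} {μ : ℕ} {θ : ℕ → F}
  {a : ℕ → ℕ → F} {r M P Q : ℝ}

lemma norm_mul_pow_le (ha : IsCompanionOrbit dd μ θ a) (hdd : ∀ f, ‖dd f‖ ≤ ‖f‖)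
    (hr0 : 0 ≤ r) (hr1 : r ≤ 1) (hθ : ∀ i < μ, ‖θ i‖ * r ^ (μ - i) ≤ P)
    (hb : ∀ n, ‖a n (μ - 1)‖ * r ^ n ≤ Q) (n : ℕ) :
    ∀ i < μ, ‖a n i‖ * r ^ (n + (μ - 1 - i)) ≤ max (r ^ (μ - 1)) (P * Q) := by
  induction n with
  | zero =>
    intro i hi
    rw [ha.zero i hi]
    split_ifs with h
    · simp [h]
    · simp [hr0]
  | succ n ih =>
    intro i hi
    have hM0 : 0 ≤ max (r ^ (μ - 1)) (P * Q) := le_max_of_le_left (by positivity)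
    rw [ha.succ n i hi]
    refine norm_add_mul_le_of_le (by positivity) (norm_add_mul_le_of_le (by positivity) ?_ ?_) ?_
    · split_ifs with h
      · simpa using hM0
      · rw [show n + 1 + (μ - 1 - i) = n + (μ - 1 - (i - 1)) by omega]
        exact ih (i - 1) (by omega)
    · refine le_max_of_le_right ?_
      calc ‖θ i * a n (μ - 1)‖ * r ^ (n + 1 + (μ - 1 - i))
          = (‖θ i‖ * r ^ (μ - i)) * (‖a n (μ - 1)‖ * r ^ n) := by
            rw [norm_mul, show n + 1 + (μ - 1 - i) = (μ - i) + n by omega, pow_add]; ring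
        _ ≤ P * Q := mul_le_mul (hθ i hi) (hb n) (by positivity)
          ((mul_nonneg (norm_nonneg _) (by positivity)).trans (hθ i hi))
    · calc ‖dd (a n i)‖ * r ^ (n + 1 + (μ - 1 - i))
          ≤ (‖a n i‖ * r ^ (n + (μ - 1 - i))) * r := by
            rw [show n + 1 + (μ - 1 - i) = n + (μ - 1 - i) + 1 by omega, pow_succ, ← mul_assoc]
            exact mul_le_mul_of_nonneg_right
              (mul_le_mul_of_nonneg_right (hdd _) (by positivity)) hr0
        _ ≤ max (r ^ (μ - 1)) (P * Q) * 1 := mul_le_mul (ih i hi) hr1 hr0 hM0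
        _ = _ := mul_one _

-- Each `dd`-term carries an extra factor `X`: this is where the gain `r` in the bound comes from.
lemma norm_coeff_companionSeries_mul_le (ha : IsCompanionOrbit dd μ θ a) (hμ : 0 < μ)
    (hdd : ∀ f, ‖dd f‖ ≤ ‖f‖) (hr0 : 0 ≤ r) (hM0 : 0 ≤ M)
    (hM : ∀ n, ∀ i < μ, ‖a n i‖ * r ^ (n + (μ - 1 - i)) ≤ M) (N : ℕ) :
    ‖coeff N (companionSeries μ θ * mk (fun n => a n (μ - 1)))‖ * r ^ N ≤
      max (r ^ (μ - 1)) (r * M) := by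
  rw [ha.companionSeries_mul hμ, map_add, map_sum, coeff_X_pow]
  refine norm_add_mul_le_of_le (by positivity) ?_
    (norm_sum_mul_le_of_le (by positivity) (le_max_of_le_right (by positivity)) fun l hl => ?_)
  · split_ifs with h
    · simp [h]
    · simp [hr0]
  · rw [Finset.mem_range] at hl
    rw [coeff_X_pow_mul']
    split_ifs with h
    · refine le_max_of_le_right ?_
      rw [coeff_mk]
      calc ‖dd (a (N - (μ - l)) l)‖ * r ^ N
          ≤ r * (‖a (N - (μ - l)) l‖ * r ^ (N - (μ - l) + (μ - 1 - l))) := by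
            rw [← mul_assoc, mul_comm r, mul_assoc, ← pow_succ',
              show N - (μ - l) + (μ - 1 - l) + 1 = N by omega]
            exact mul_le_mul_of_nonneg_right (hdd _) (by positivity)
        _ ≤ r * M := mul_le_mul_of_nonneg_left (hM _ l hl) hr0
    · simp [hr0]

theorem norm_mul_pow_le_one (ha : IsCompanionOrbit dd μ θ a) (hdd : ∀ f, ‖dd f‖ ≤ ‖f‖)
    (hdd0 : dd 0 = 0) (hdd1 : dd 1 = 0) (hr0 : 0 < r) (hr1 : r < 1)
    (hdecay : Tendsto (fun n => ‖a n (μ - 1)‖ * r ^ n) atTop (𝓝 0)) :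
    ∀ j < μ, ‖θ j‖ * r ^ (μ - j) ≤ 1 := by
  intro j hj
  have hμ : 0 < μ := by omega
  set B : F⟦X⟧ := mk fun n => a n (μ - 1) with hB
  set q := companionSeries μ θ
  have hq_decay : Tendsto (fun m => ‖coeff m q‖ * r ^ m) atTop (𝓝 0) :=
    tendsto_const_nhds.congr' (eventually_atTop.2 ⟨μ + 1, fun m hm => by
      simp [q, coeff_companionSeries_of_lt (show μ < m by omega)]⟩)
  have hB_decay : Tendsto (fun n => ‖coeff n B‖ * r ^ n) atTop (𝓝 0) := by simpa [hB] using hdecay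
  set P := gaussNorm (‖·‖) r q
  set Q := gaussNorm (‖·‖) r B
  have hθP : ∀ l < μ, ‖θ l‖ * r ^ (μ - l) ≤ P := fun l hl => by
    simpa [q, coeff_companionSeries_sub hl] using le_gaussNorm _ r q hq_decay.bddAbove_range (μ - l)
  have hbQ : ∀ n, ‖a n (μ - 1)‖ * r ^ n ≤ Q := fun n => by
    simpa [hB] using le_gaussNorm _ r B hB_decay.bddAbove_range n
  have hQ : r ^ (μ - 1) ≤ Q := by
    simpa [ha.eq_of_lt hdd0 hdd1 (μ - 1) (by omega) (μ - 1) (by omega)] using hbQ (μ - 1)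
  obtain ⟨N, hN⟩ := exists_norm_coeff_mul_eq_gaussNorm_mul hr0 hq_decay hB_decay
  have hPQ : P * Q ≤ max (r ^ (μ - 1)) (r * max (r ^ (μ - 1)) (P * Q)) :=
    hN ▸ ha.norm_coeff_companionSeries_mul_le hμ hdd hr0.le (le_max_of_le_left (by positivity))
      (ha.norm_mul_pow_le hdd hr0.le hr1.le hθP hbQ) N
  have hPQ' : P * Q ≤ r ^ (μ - 1) := by
    by_contra! hlt
    refine (lt_irrefl (P * Q)) (hPQ.trans_lt ?_)
    rw [max_eq_right hlt.le]
    exact max_lt hlt (mul_lt_of_lt_one_left ((pow_pos hr0 _).trans hlt) hr1)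
  have hP : P ≤ 1 := le_of_mul_le_mul_right (by linarith) ((pow_pos hr0 _).trans_le hQ)
  exact (hθP j hj).trans hP

end IsCompanionOrbit

end CompanionOrbit

-- Read as sequences, vectors indexed by `Fin μ` admit the shift `i ↦ i - 1` without bound proofs.
def natExtend {R : Type*} [Zero R] {μ : ℕ} (v : Fin μ → R) (i : ℕ) : R :=
  if h : i < μ then v ⟨i, h⟩ else 0

section CompanionMatrix

open Matrix

variable {R : Type*} [Semiring R] {μ : ℕ} {θ : Fin μ → R} {G1 : Matrix (Fin μ) (Fin μ) R}

lemma natExtend_companion_mulVec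
    (hG1 : ∀ i j : Fin μ, G1 i j =
      if (j : ℕ) = μ - 1 then θ i else if (i : ℕ) = (j : ℕ) + 1 then 1 else 0)
    (w : Fin μ → R) {i : ℕ} (hi : i < μ) :
    natExtend (G1 *ᵥ w) i =
      (if i = 0 then 0 else natExtend w (i - 1)) + natExtend θ i * natExtend w (μ - 1) := by
  have hlast : μ - 1 < μ := by omega
  simp only [natExtend, dif_pos hi, dif_pos hlast, mulVec, dotProduct, hG1]
  rcases Nat.eq_zero_or_pos i with rfl | hi0
  · rw [Finset.sum_eq_single_of_mem (⟨μ - 1, hlast⟩ : Fin μ) (Finset.mem_univ _)]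
    · simp
    · intro k _ hk
      rw [if_neg (fun h => hk (Fin.ext h)), if_neg (by omega), zero_mul]
  · rw [Finset.sum_eq_add_of_mem (⟨μ - 1, hlast⟩ : Fin μ) (⟨i - 1, by omega⟩ : Fin μ)
      (Finset.mem_univ _) (Finset.mem_univ _) (by simp [Fin.ext_iff]; omega)]
    · rw [if_pos rfl, if_neg (show i - 1 ≠ μ - 1 by omega), if_pos (show i = i - 1 + 1 by omega),
        if_neg hi0.ne', dif_pos (by omega), one_mul, add_comm]
    · intro k _ hk
      rw [if_neg (fun h => hk.1 (Fin.ext h)), if_neg (fun h => hk.2 (Fin.ext (by simp; omega))),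
        zero_mul]

end CompanionMatrix

section PowersOfCompanion

open Matrix

variable {F : Type*} [NormedField F] {dd : F → F} {μ : ℕ} {θ : Fin μ → F}
  {G1 : Matrix (Fin μ) (Fin μ) F}

lemma norm_companion_apply_mul_pow_le
    (hG1 : ∀ i j : Fin μ, G1 i j =
      if (j : ℕ) = μ - 1 then θ i else if (i : ℕ) = (j : ℕ) + 1 then 1 else 0)
    {σ : ℝ} (hσ : 0 ≤ σ) (hθ : ∀ j : Fin μ, ‖θ j‖ ≤ σ ^ (μ - (j : ℕ))) (i k : Fin μ) :
    ‖G1 i k‖ * σ ^ (i : ℕ) ≤ σ * σ ^ (k : ℕ) := by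
  rw [hG1]
  split_ifs with hk hik
  · calc ‖θ i‖ * σ ^ (i : ℕ) ≤ σ ^ (μ - i) * σ ^ (i : ℕ) :=
          mul_le_mul_of_nonneg_right (hθ i) (by positivity)
      _ = σ * σ ^ (k : ℕ) := by rw [← pow_add, ← pow_succ', hk]; congr 1; omega
  · rw [norm_one, one_mul, hik, pow_succ']
  · rw [norm_zero, zero_mul]; positivity

lemma update_zero_one_succ (hdd0 : dd 0 = 0) (hdd1 : dd 1 = 0) {G : ℕ → Matrix (Fin μ) (Fin μ) F}
    (hGone : G 1 = G1) (hGsucc : ∀ n : ℕ, 1 ≤ n → G (n + 1) = G1 * G n + (G n).map dd)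
    (n : ℕ) : Function.update G 0 1 (n + 1) =
      G1 * Function.update G 0 1 n + (Function.update G 0 1 n).map dd := by
  rcases n with _ | n
  · rw [zero_add, Function.update_of_ne one_ne_zero, Function.update_self, hGone, mul_one]
    ext i j
    simp only [Matrix.add_apply, map_apply, one_apply]
    split_ifs <;> simp [hdd0, hdd1]
  · simp only [Function.update_of_ne (Nat.succ_ne_zero _)]
    exact hGsucc (n + 1) (by omega)

lemma isCompanionOrbit_natExtend
    (hG1 : ∀ i j : Fin μ, G1 i j =
      if (j : ℕ) = μ - 1 then θ i else if (i : ℕ) = (j : ℕ) + 1 then 1 else 0)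
    {H : ℕ → Matrix (Fin μ) (Fin μ) F} (hH0 : H 0 = 1)
    (hHsucc : ∀ n, H (n + 1) = G1 * H n + (H n).map dd) (hμ : 0 < μ) :
    IsCompanionOrbit dd μ (natExtend θ) (fun n => natExtend fun i => H n i ⟨0, hμ⟩) where
  zero i hi := by simp [natExtend, hi, hH0, one_apply, Fin.ext_iff]
  succ n i hi := by
    rw [← natExtend_companion_mulVec hG1 _ hi]
    simp [natExtend, hi, hHsucc, mulVec, dotProduct, mul_apply]

lemma norm_apply_le_pow_of_norm_le_pow [IsUltrametricDist F] (hdd : ∀ f, ‖dd f‖ ≤ ‖f‖)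
    (hG1 : ∀ i j : Fin μ, G1 i j =
      if (j : ℕ) = μ - 1 then θ i else if (i : ℕ) = (j : ℕ) + 1 then 1 else 0)
    {H : ℕ → Matrix (Fin μ) (Fin μ) F} (hH0 : H 0 = 1)
    (hHsucc : ∀ n, H (n + 1) = G1 * H n + (H n).map dd) {σ : ℝ} (hσ : 1 ≤ σ)
    (hθ : ∀ j : Fin μ, ‖θ j‖ ≤ σ ^ (μ - (j : ℕ))) (n : ℕ) (i k : Fin μ) :
    ‖H n i k‖ ≤ σ ^ (n + μ - 1) :=
  calc ‖H n i k‖ ≤ ‖H n i k‖ * σ ^ (i : ℕ) :=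
        le_mul_of_one_le_right (norm_nonneg _) (one_le_pow₀ hσ)
    _ ≤ σ ^ n * σ ^ (k : ℕ) :=
        norm_apply_mul_le_pow_mul hdd hH0 hHsucc (fun _ => by positivity) hσ
          (norm_companion_apply_mul_pow_le hG1 (by positivity) hθ) n i k
    _ ≤ σ ^ (n + μ - 1) := by rw [← pow_add]; exact pow_le_pow_right₀ hσ (by omega)

lemma norm_le_pow_of_eventually_norm_le_pow [IsUltrametricDist F] (hdd : ∀ f, ‖dd f‖ ≤ ‖f‖)
    (hdd0 : dd 0 = 0) (hdd1 : dd 1 = 0)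
    (hG1 : ∀ i j : Fin μ, G1 i j =
      if (j : ℕ) = μ - 1 then θ i else if (i : ℕ) = (j : ℕ) + 1 then 1 else 0)
    {H : ℕ → Matrix (Fin μ) (Fin μ) F} (hH0 : H 0 = 1)
    (hHsucc : ∀ n, H (n + 1) = G1 * H n + (H n).map dd) {τ s : ℝ} (hτ : 0 ≤ τ) (hτs : τ < s)
    (hs : 1 < s) (h : ∀ᶠ n in atTop, ∀ i k, ‖H n i k‖ ≤ τ ^ n) (j : Fin μ) :
    ‖θ j‖ ≤ s ^ (μ - (j : ℕ)) := by
  have hμ : 0 < μ := j.pos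
  have hs0 : 0 < s := by linarith
  have hdecay : Tendsto (fun n => ‖H n ⟨μ - 1, by omega⟩ ⟨0, hμ⟩‖ * s⁻¹ ^ n) atTop (𝓝 0) := by
    refine squeeze_zero' (Eventually.of_forall fun n => by positivity) ?_
      (tendsto_pow_atTop_nhds_zero_of_lt_one (div_nonneg hτ hs0.le) ((div_lt_one hs0).2 hτs))
    filter_upwards [h] with n hn
    rw [div_eq_mul_inv, mul_pow]
    exact mul_le_mul_of_nonneg_right (hn _ _) (by positivity)
  have key := (isCompanionOrbit_natExtend hG1 hH0 hHsucc hμ).norm_mul_pow_le_one hdd hdd0 hdd1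
    (inv_pos.2 hs0) (inv_lt_one_of_one_lt₀ hs)
    (by simpa only [natExtend, dif_pos (show μ - 1 < μ by omega)] using hdecay) j j.isLt
  rwa [natExtend, dif_pos j.isLt, inv_pow, mul_inv_le_iff₀ (by positivity), one_mul] at key

lemma iSup_norm_le_pow_of_norm_le_pow [IsUltrametricDist F] (hdd : ∀ f, ‖dd f‖ ≤ ‖f‖)
    (hdd0 : dd 0 = 0) (hdd1 : dd 1 = 0)
    (hG1 : ∀ i j : Fin μ, G1 i j =
      if (j : ℕ) = μ - 1 then θ i else if (i : ℕ) = (j : ℕ) + 1 then 1 else 0)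
    {G : ℕ → Matrix (Fin μ) (Fin μ) F} (hGone : G 1 = G1)
    (hGsucc : ∀ n : ℕ, 1 ≤ n → G (n + 1) = G1 * G n + (G n).map dd) {σ : ℝ} (hσ : 1 ≤ σ)
    (hθ : ∀ j : Fin μ, ‖θ j‖ ≤ σ ^ (μ - (j : ℕ))) {n : ℕ} (hn : 1 ≤ n) :
    (⨆ p : Fin μ × Fin μ, ‖G n p.1 p.2‖) ≤ σ ^ (n + μ - 1) := by
  refine Real.iSup_le (fun p => ?_) (by positivity)
  rw [← Function.update_of_ne (by omega : n ≠ 0) 1 G]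
  exact norm_apply_le_pow_of_norm_le_pow hdd hG1 (Function.update_self ..)
    (update_zero_one_succ hdd0 hdd1 hGone hGsucc) hσ hθ n p.1 p.2

lemma isBoundedUnder_rpow_inv_iSup_norm [IsUltrametricDist F] (hdd : ∀ f, ‖dd f‖ ≤ ‖f‖)
    (hdd0 : dd 0 = 0) (hdd1 : dd 1 = 0)
    (hG1 : ∀ i j : Fin μ, G1 i j =
      if (j : ℕ) = μ - 1 then θ i else if (i : ℕ) = (j : ℕ) + 1 then 1 else 0)
    {G : ℕ → Matrix (Fin μ) (Fin μ) F} (hGone : G 1 = G1)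
    (hGsucc : ∀ n : ℕ, 1 ≤ n → G (n + 1) = G1 * G n + (G n).map dd) :
    IsBoundedUnder (· ≤ ·) atTop
      (fun n : ℕ => (⨆ p : Fin μ × Fin μ, ‖G n p.1 p.2‖) ^ (n : ℝ)⁻¹) := by
  set s := 1 + ∑ j, ‖θ j‖
  have hs : 1 ≤ s := le_add_of_nonneg_right (by positivity)
  have hθs : ∀ j : Fin μ, ‖θ j‖ ≤ s ^ (μ - (j : ℕ)) := fun j =>
    calc ‖θ j‖ ≤ ∑ j, ‖θ j‖ := Finset.single_le_sum (fun _ _ => norm_nonneg _) (Finset.mem_univ j)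
      _ ≤ s := le_add_of_nonneg_left zero_le_one
      _ ≤ s ^ (μ - (j : ℕ)) := le_self_pow₀ hs (by omega)
  refine isBoundedUnder_rpow_inv_of_le_mul_pow (fun n => Real.iSup_nonneg fun _ => norm_nonneg _)
    (K := s ^ μ) (by positivity) (by positivity) (eventually_atTop.2 ⟨1, fun n hn => ?_⟩)
  calc _ ≤ s ^ (n + μ - 1) :=
        iSup_norm_le_pow_of_norm_le_pow hdd hdd0 hdd1 hG1 hGone hGsucc hs hθs hn
    _ ≤ s ^ μ * s ^ n := by rw [← pow_add]; exact pow_le_pow_right₀ hs (by omega)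

lemma norm_le_pow_of_limsup_le [IsUltrametricDist F] (hdd : ∀ f, ‖dd f‖ ≤ ‖f‖)
    (hdd0 : dd 0 = 0) (hdd1 : dd 1 = 0)
    (hG1 : ∀ i j : Fin μ, G1 i j =
      if (j : ℕ) = μ - 1 then θ i else if (i : ℕ) = (j : ℕ) + 1 then 1 else 0)
    {G : ℕ → Matrix (Fin μ) (Fin μ) F} (hGone : G 1 = G1)
    (hGsucc : ∀ n : ℕ, 1 ≤ n → G (n + 1) = G1 * G n + (G n).map dd) {σ : ℝ} (hσ : 1 ≤ σ)
    (h : limsup (fun n : ℕ => (⨆ p : Fin μ × Fin μ, ‖G n p.1 p.2‖) ^ (n : ℝ)⁻¹) atTop ≤ σ)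
    (j : Fin μ) : ‖θ j‖ ≤ σ ^ (μ - (j : ℕ)) := by
  refine ge_of_tendsto (((continuous_pow _).tendsto σ).mono_left nhdsWithin_le_nhds)
    (x := 𝓝[>] σ) ?_
  filter_upwards [self_mem_nhdsWithin] with s (hs : σ < s)
  refine norm_le_pow_of_eventually_norm_le_pow hdd hdd0 hdd1 hG1 (Function.update_self ..)
    (update_zero_one_succ hdd0 hdd1 hGone hGsucc) (τ := (σ + s) / 2) (by linarith) (by linarith)
    (by linarith) ?_ j
  filter_upwards [eventually_le_pow_of_limsup_rpow_inv_lt (τ := (σ + s) / 2)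
    (fun n => Real.iSup_nonneg fun _ => norm_nonneg _)
    (isBoundedUnder_rpow_inv_iSup_norm hdd hdd0 hdd1 hG1 hGone hGsucc) (h.trans_lt (by linarith)),
    eventually_ne_atTop 0] with n hn hn0 i k
  rw [Function.update_of_ne hn0]
  exact (le_ciSup (Set.finite_range _).bddAbove (i, k)).trans hn

end PowersOfCompanion

theorem stmt_0_general {F : Type*} [NormedField F] [IsUltrametricDist F]
    (dd : F → F)
    (hddadd : ∀ f g : F, dd (f + g) = dd f + dd g)
    (hddmul : ∀ f g : F, dd (f * g) = f * dd g + g * dd f)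
    (hddnorm : ∀ f : F, ‖dd f‖ ≤ ‖f‖)
    (μ : ℕ) (θ : Fin μ → F)
    (G1 : Matrix (Fin μ) (Fin μ) F)
    (hG1 : ∀ i j : Fin μ, G1 i j =
      if (j : ℕ) = μ - 1 then θ i else if (i : ℕ) = (j : ℕ) + 1 then 1 else 0)
    (G : ℕ → Matrix (Fin μ) (Fin μ) F)
    (hGone : G 1 = G1)
    (hGsucc : ∀ n : ℕ, 1 ≤ n → G (n + 1) = G1 * G n + (G n).map dd)
    (σ : ℝ) (hσ : 1 ≤ σ) :
    List.TFAE
      [Filter.limsup (fun n : ℕ => (⨆ p : Fin μ × Fin μ, ‖G n p.1 p.2‖) ^ ((n : ℝ)⁻¹))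
          Filter.atTop ≤ σ,
       ∀ j : Fin μ, ‖θ j‖ ≤ σ ^ (μ - (j : ℕ)),
       ∀ n : ℕ, 1 ≤ n → (⨆ p : Fin μ × Fin μ, ‖G n p.1 p.2‖) ≤ σ ^ (n + μ - 1)] := by
  have hdd0 : dd 0 = 0 := by simpa using hddadd 0 0
  have hdd1 : dd 1 = 0 := by simpa using hddmul 1 1
  tfae_have 1 → 2 := norm_le_pow_of_limsup_le hddnorm hdd0 hdd1 hG1 hGone hGsucc hσ
  tfae_have 2 → 3 := fun hθ _ hn =>
    iSup_norm_le_pow_of_norm_le_pow hddnorm hdd0 hdd1 hG1 hGone hGsucc hσ hθ hn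
  tfae_have 3 → 1 := fun h =>
    limsup_rpow_inv_le_of_le_mul_pow (fun n => Real.iSup_nonneg fun _ => norm_nonneg _)
      (K := σ ^ μ) (by positivity) (by positivity) (eventually_atTop.2 ⟨1, fun n hn =>
        (h n hn).trans (by rw [← pow_add]; exact pow_le_pow_right₀ hσ (by omega))⟩)
  tfae_finish

/-- Turrittin–Katz: equivalence of spectral bound, coefficient bounds, and bounds on the
matrices of all powers of the differential operator in a cyclic basis. -/
theorem stmt_0 {F : Type*} [NormedField F] [IsUltrametricDist F] [CompleteSpace F]
    (dd : F → F)
    (hddadd : ∀ f g : F, dd (f + g) = dd f + dd g)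
    (hddmul : ∀ f g : F, dd (f * g) = f * dd g + g * dd f)
    (hddnorm : ∀ f : F, ‖dd f‖ ≤ ‖f‖)
    (μ : ℕ) (hμ : 1 ≤ μ) (θ : Fin μ → F)
    (G1 : Matrix (Fin μ) (Fin μ) F)
    (hG1 : ∀ i j : Fin μ, G1 i j =
      if (j : ℕ) = μ - 1 then θ i else if (i : ℕ) = (j : ℕ) + 1 then 1 else 0)
    (G : ℕ → Matrix (Fin μ) (Fin μ) F)
    (hGone : G 1 = G1)
    (hGsucc : ∀ n : ℕ, 1 ≤ n → G (n + 1) = G1 * G n + (G n).map dd)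
    (σ : ℝ) (hσ : 1 ≤ σ) :
    List.TFAE
      [Filter.limsup (fun n : ℕ => (⨆ p : Fin μ × Fin μ, ‖G n p.1 p.2‖) ^ ((n : ℝ)⁻¹))
          Filter.atTop ≤ σ,
       ∀ j : Fin μ, ‖θ j‖ ≤ σ ^ (μ - (j : ℕ)),
       ∀ n : ℕ, 1 ≤ n → (⨆ p : Fin μ × Fin μ, ‖G n p.1 p.2‖) ≤ σ ^ (n + μ - 1)] :=
  stmt_0_general dd hddadd hddmul hddnorm μ θ G1 hG1 G hGone hGsucc σ hσ
end

section
/- If limsup_{n→∞} ‖G_n‖^{1/n} ≤ 1 (i.e., the differential module is regular), then |θ_j| ≤ 1 for every j = 0, …, μ−1; that is, the matrix G_1 of the operator in any cyclic basis has norm ≤ 1. -/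
open Filter Finset

namespace Stmt2Aux

variable {F : Type*} [NormedField F] [IsUltrametricDist F]

lemma norm_sum_lt {ι : Type*} (s : Finset ι) (h : ι → F) {B : ℝ} (hB : 0 < B)
    (hb : ∀ i ∈ s, ‖h i‖ < B) : ‖∑ i ∈ s, h i‖ < B := by
  rcases s.eq_empty_or_nonempty with rfl | hs
  · simpa using hB
  · obtain ⟨i, hi, hle⟩ := IsUltrametricDist.exists_norm_finset_sum_le_of_nonempty hs h
    exact lt_of_le_of_lt hle (hb i hi)

lemma norm_add3_le (x y z : F) : ‖x + y + z‖ ≤ max (max ‖x‖ ‖y‖) ‖z‖ :=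
  le_trans (IsUltrametricDist.norm_add_le_max _ _)
    (max_le_max (IsUltrametricDist.norm_add_le_max _ _) le_rfl)

lemma norm_sub_le_max' (x y : F) : ‖x - y‖ ≤ max ‖x‖ ‖y‖ := by
  rw [sub_eq_add_neg]
  exact le_trans (IsUltrametricDist.norm_add_le_max x (-y)) (by rw [norm_neg])

lemma wbound (μ : ℕ) (θ' : ℕ → F) (dd : F → F)
    (hddnorm : ∀ f : F, ‖dd f‖ ≤ ‖f‖)
    (c : ℝ) (hc : 1 < c) (hθa : ∀ i, i < μ → ‖θ' i‖ ≤ c ^ (μ - i))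
    (u : ℕ → ℕ → F)
    (hrec : ∀ n, 1 ≤ n → ∀ i, i < μ →
      u (n+1) i = (if i = 0 then 0 else u n (i-1)) + θ' i * u n (μ-1) + dd (u n i))
    (K : ℕ) (hbase : ∀ i, i < μ → ‖u 1 i‖ * c ^ i ≤ c ^ K) :
    ∀ n, 1 ≤ n → ∀ i, i < μ → ‖u n i‖ * c ^ i ≤ c ^ (n - 1 + K) := by
  have hc0 : (0:ℝ) < c := lt_trans one_pos hc
  intro n hn
  induction n, hn using Nat.le_induction with
  | base => intro i hi; simpa using hbase i hi
  | succ n hn ih =>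
    intro i hi
    rw [hrec n hn i hi]
    have hmax := norm_add3_le (if i = 0 then (0:F) else u n (i-1)) (θ' i * u n (μ-1)) (dd (u n i))
    have hE : (n + 1 - 1 + K) = (n - 1 + K) + 1 := by omega
    have hgoal : ∀ w : F, ‖w‖ ≤ max (max ‖(if i = 0 then (0:F) else u n (i-1))‖
        ‖θ' i * u n (μ-1)‖) ‖dd (u n i)‖ → ‖w‖ * c ^ i ≤ c ^ (n + 1 - 1 + K) := by
      intro w hw
      have h1 : ‖(if i = 0 then (0:F) else u n (i-1))‖ * c ^ i ≤ c ^ (n - 1 + K) * c := by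
        by_cases h0 : i = 0
        · simp [h0]; positivity
        · rw [if_neg h0]
          have hi1 : i - 1 < μ := by omega
          have := ih (i-1) hi1
          calc ‖u n (i-1)‖ * c ^ i = (‖u n (i-1)‖ * c ^ (i-1)) * c := by
                rw [mul_assoc, ← pow_succ]
                congr 2
                omega
            _ ≤ c ^ (n - 1 + K) * c := by
                apply mul_le_mul_of_nonneg_right this (le_of_lt hc0)
      have h2 : ‖θ' i * u n (μ-1)‖ * c ^ i ≤ c ^ (n - 1 + K) * c := by
        have hμ1 : μ - 1 < μ := by omega
        have hu := ih (μ-1) hμ1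
        have hstep : ‖θ' i * u n (μ-1)‖ * c ^ i * c ^ (μ-1) ≤ (c ^ (n - 1 + K) * c) * c ^ (μ-1) := by
          calc ‖θ' i * u n (μ-1)‖ * c ^ i * c ^ (μ-1)
              = (‖θ' i‖ * c ^ i) * (‖u n (μ-1)‖ * c ^ (μ-1)) := by rw [norm_mul]; ring
            _ ≤ (c ^ (μ - i) * c ^ i) * c ^ (n - 1 + K) := by
                apply mul_le_mul _ hu (by positivity) (by positivity)
                exact mul_le_mul_of_nonneg_right (hθa i hi) (by positivity)
            _ = c ^ (μ - i + i) * c ^ (n - 1 + K) := by rw [pow_add c (μ - i) i]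
            _ = (c ^ (n - 1 + K) * c) * c ^ (μ-1) := by
                rw [show μ - i + i = μ from by omega, ← pow_add, ← pow_succ, ← pow_add]
                congr 1
                omega
        exact le_of_mul_le_mul_right hstep (by positivity)
      have h3 : ‖dd (u n i)‖ * c ^ i ≤ c ^ (n - 1 + K) * c := by
        calc ‖dd (u n i)‖ * c ^ i ≤ ‖u n i‖ * c ^ i :=
              mul_le_mul_of_nonneg_right (hddnorm _) (by positivity)
          _ ≤ c ^ (n - 1 + K) := ih i hi
          _ ≤ c ^ (n - 1 + K) * c := le_mul_of_one_le_right (by positivity) (le_of_lt hc)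
      calc ‖w‖ * c ^ i ≤ max (max (‖(if i = 0 then (0:F) else u n (i-1))‖ * c ^ i)
            (‖θ' i * u n (μ-1)‖ * c ^ i)) (‖dd (u n i)‖ * c ^ i) := by
            rw [← max_mul_of_nonneg _ _ (by positivity : (0:ℝ) ≤ c ^ i),
               ← max_mul_of_nonneg _ _ (by positivity : (0:ℝ) ≤ c ^ i)]
            exact mul_le_mul_of_nonneg_right hw (by positivity)
        _ ≤ c ^ (n - 1 + K) * c := by
            apply max_le (max_le h1 h2) h3
        _ = c ^ (n + 1 - 1 + K) := by rw [hE, pow_succ]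
    exact hgoal _ hmax

theorem core (μ : ℕ) (hμ : 1 ≤ μ) (θ' : ℕ → F) (dd : F → F)
    (hddnorm : ∀ f : F, ‖dd f‖ ≤ ‖f‖) (hdd0 : dd 0 = 0) (hdd1 : dd 1 = 0)
    (c : ℝ) (hc : 1 < c)
    (hθa : ∀ i, i < μ → ‖θ' i‖ ≤ c ^ (μ - i))
    (j : ℕ) (hjμ : j < μ) (hθb : ‖θ' j‖ = c ^ (μ - j))
    (hθc : ∀ i, i < j → ‖θ' i‖ < c ^ (μ - i))
    (u : ℕ → ℕ → F)
    (hrec : ∀ n, 1 ≤ n → ∀ i, i < μ →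
      u (n+1) i = (if i = 0 then 0 else u n (i-1)) + θ' i * u n (μ-1) + dd (u n i))
    (hinit : ∀ i, i < μ → u 1 i = if μ - 1 = 0 then θ' i else if i = 1 then 1 else 0)
    (wbnd : ∀ n, 1 ≤ n → ∀ i, i < μ → ‖u n i‖ * c ^ i ≤ c ^ n)
    (M : ℕ) :
    ∃ m, M ≤ m ∧ c ^ (m + 1) ≤ ‖u m (μ - 1)‖ * c ^ μ := by
  have hc0 : (0:ℝ) < c := lt_trans one_pos hc
  have NS : ∀ m, 1 ≤ m → ‖u m (μ-1)‖ * c ^ (μ - 1) ≤ c ^ m :=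
    fun m hm => wbnd m hm (μ-1) (by omega)
  -- approximate closed form for low coordinates in terms of the top coordinate
  have TT : ∀ k, k ≤ μ - 1 → ∀ n, 1 ≤ n →
      ‖u n (μ - 1 - k) - (u (n + k) (μ-1) - ∑ m ∈ range k, θ' (μ - k + m) * u (n + m) (μ-1))‖
          * c ^ μ ≤ c ^ (n + k) := by
    intro k
    induction k with
    | zero =>
      intro _ n hn
      simp only [Nat.sub_zero, Nat.add_zero, range_zero, sum_empty, sub_zero, sub_self,
        norm_zero, zero_mul]
      positivity
    | succ k ih =>
      intro hk n hn
      have hkk : k ≤ μ - 1 := by omega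
      have hiμ : μ - 1 - k < μ := by omega
      have hine : ¬(μ - 1 - k = 0) := by omega
      have heq := hrec n hn (μ - 1 - k) hiμ
      rw [if_neg hine] at heq
      have husolve : u n (μ - 1 - (k+1)) =
          u (n+1) (μ - 1 - k) - θ' (μ - 1 - k) * u n (μ-1) - dd (u n (μ - 1 - k)) := by
        rw [show μ - 1 - (k+1) = μ - 1 - k - 1 from by omega, heq]
        ring
      have hsum : ∑ m ∈ range (k+1), θ' (μ - (k+1) + m) * u (n + m) (μ-1)
          = (∑ m ∈ range k, θ' (μ - k + m) * u ((n+1) + m) (μ-1))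
            + θ' (μ - 1 - k) * u n (μ-1) := by
        have hcg : ∀ m ∈ range k, θ' (μ - (k+1) + (m+1)) * u (n + (m+1)) (μ-1)
            = θ' (μ - k + m) * u ((n+1) + m) (μ-1) := by
          intro m _
          rw [show μ - (k+1) + (m+1) = μ - k + m from by omega,
            show n + (m+1) = (n+1) + m from by omega]
        rw [Finset.sum_range_succ', Finset.sum_congr rfl hcg,
          show μ - (k+1) + 0 = μ - 1 - k from by omega]
        simp
      have halg : u n (μ - 1 - (k+1))
            - (u (n + (k+1)) (μ-1) - ∑ m ∈ range (k+1), θ' (μ - (k+1) + m) * u (n + m) (μ-1))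
          = (u (n+1) (μ - 1 - k)
              - (u ((n+1) + k) (μ-1) - ∑ m ∈ range k, θ' (μ - k + m) * u ((n+1) + m) (μ-1)))
            - dd (u n (μ - 1 - k)) := by
        rw [husolve, hsum, show n + (k+1) = (n+1) + k from by omega]
        ring
      rw [halg]
      have h1 := ih hkk (n+1) (by omega)
      have h2 : ‖dd (u n (μ-1-k))‖ * c ^ μ ≤ c ^ (n + (k+1)) := by
        have hu := wbnd n hn (μ-1-k) hiμ
        calc ‖dd (u n (μ-1-k))‖ * c ^ μ ≤ ‖u n (μ-1-k)‖ * c ^ μ :=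
              mul_le_mul_of_nonneg_right (hddnorm _) (by positivity)
          _ = (‖u n (μ-1-k)‖ * c ^ (μ-1-k)) * c ^ (k+1) := by
              rw [mul_assoc, ← pow_add]
              congr 2
              omega
          _ ≤ c ^ n * c ^ (k+1) := mul_le_mul_of_nonneg_right hu (by positivity)
          _ = c ^ (n + (k+1)) := by rw [← pow_add]
      refine le_trans (mul_le_mul_of_nonneg_right (norm_sub_le_max' _ _)
        (by positivity : (0:ℝ) ≤ c ^ μ)) ?_
      rw [max_mul_of_nonneg _ _ (by positivity : (0:ℝ) ≤ c ^ μ)]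
      apply max_le _ h2
      calc _ ≤ c ^ ((n+1) + k) := h1
        _ = c ^ (n + (k+1)) := by congr 1; omega
  -- the approximate scalar recurrence
  have Arec : ∀ n, 1 ≤ n →
      ‖u (n + μ) (μ-1) - ∑ i ∈ range μ, θ' i * u (n + i) (μ-1)‖ * c ^ μ ≤ c ^ (n + μ) := by
    intro n hn
    have h0 := hrec n hn 0 (by omega)
    rw [if_pos rfl] at h0
    have hTT := TT (μ - 1) le_rfl (n+1) (by omega)
    rw [show μ - 1 - (μ - 1) = 0 from by omega] at hTT
    have hsum2 : ∑ i ∈ range μ, θ' i * u (n + i) (μ-1)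
        = (∑ m ∈ range (μ-1), θ' (μ - (μ-1) + m) * u ((n+1) + m) (μ-1))
          + θ' 0 * u n (μ-1) := by
      have hcg : ∀ m ∈ range (μ-1), θ' (m+1) * u (n + (m+1)) (μ-1)
          = θ' (μ - (μ-1) + m) * u ((n+1) + m) (μ-1) := by
        intro m _
        rw [show μ - (μ-1) + m = m + 1 from by omega,
          show n + (m+1) = (n+1) + m from by omega]
      rw [show (range μ) = range ((μ-1)+1) from by congr 1; omega, Finset.sum_range_succ',
        Finset.sum_congr rfl hcg]
      simp
    have halg2 : u (n + μ) (μ-1) - ∑ i ∈ range μ, θ' i * u (n + i) (μ-1)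
        = dd (u n 0) - (u (n+1) 0 - (u ((n+1) + (μ-1)) (μ-1)
            - ∑ m ∈ range (μ-1), θ' (μ - (μ-1) + m) * u ((n+1) + m) (μ-1))) := by
      rw [hsum2, h0, show n + μ = (n+1) + (μ-1) from by omega]
      ring
    rw [halg2]
    have h2 : ‖dd (u n 0)‖ * c ^ μ ≤ c ^ (n + μ) := by
      have hu := wbnd n hn 0 (by omega)
      rw [pow_zero, mul_one] at hu
      calc ‖dd (u n 0)‖ * c ^ μ ≤ ‖u n 0‖ * c ^ μ :=
            mul_le_mul_of_nonneg_right (hddnorm _) (by positivity)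
        _ ≤ c ^ n * c ^ μ := mul_le_mul_of_nonneg_right hu (by positivity)
        _ = c ^ (n + μ) := by rw [← pow_add]
    refine le_trans (mul_le_mul_of_nonneg_right (norm_sub_le_max' _ _)
      (by positivity : (0:ℝ) ≤ c ^ μ)) ?_
    rw [max_mul_of_nonneg _ _ (by positivity : (0:ℝ) ≤ c ^ μ)]
    apply max_le h2
    calc _ ≤ c ^ ((n+1) + (μ-1)) := hTT
      _ = c ^ (n + μ) := by congr 1; omega
  -- initial values
  have IV : ∀ m, 1 ≤ m → m ≤ μ - 1 → ∀ i, i < μ → u m i = if i = m then 1 else 0 := by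
    intro m hm
    induction m, hm using Nat.le_induction with
    | base =>
      intro h1 i hi
      rw [hinit i hi, if_neg (by omega : ¬(μ - 1 = 0))]
    | succ m hm ih =>
      intro hm1 i hi
      have ih' := ih (by omega)
      rw [hrec m hm i hi, ih' (μ-1) (by omega), if_neg (by omega : ¬(μ - 1 = m)), mul_zero,
        ih' i hi]
      by_cases h0 : i = 0
      · rw [if_pos h0, if_neg (by omega : ¬(i = m)), hdd0, if_neg (by omega : ¬(i = m+1))]
        ring
      · rw [if_neg h0, ih' (i-1) (by omega)]
        by_cases h1 : i = m + 1
        · rw [if_pos (by omega : i - 1 = m), if_neg (by omega : ¬(i = m)), hdd0, if_pos h1]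
          ring
        · rw [if_neg (by omega : ¬(i - 1 = m)), if_neg h1]
          by_cases h2 : i = m
          · rw [if_pos h2, hdd1]
            ring
          · rw [if_neg h2, hdd0]
            ring
  -- the bad value witnessing non-smallness
  have notZ : ∃ m0, j + 1 ≤ m0 ∧ c ^ (m0 + 1) ≤ ‖u m0 (μ-1)‖ * c ^ μ := by
    by_cases hjtop : j + 1 < μ
    · refine ⟨μ - 1, by omega, ?_⟩
      have h1 : u (μ-1) (μ-1) = 1 := by
        rw [IV (μ-1) (by omega) le_rfl (μ-1) (by omega), if_pos rfl]
      rw [h1, norm_one, one_mul, show μ - 1 + 1 = μ from by omega]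
    · have hjeq : j = μ - 1 := by omega
      by_cases hμ1 : μ = 1
      · subst hμ1
        refine ⟨1, by omega, ?_⟩
        have h1 : u 1 0 = θ' 0 := by
          have := hinit 0 (by omega)
          rwa [if_pos rfl] at this
        have hj0 : j = 0 := by omega
        rw [show (1:ℕ) - 1 = 0 from rfl, h1]
        rw [hj0] at hθb
        rw [hθb]
        exact le_of_eq (by ring)
      · have hμ2 : 2 ≤ μ := by omega
        refine ⟨μ, by omega, ?_⟩
        have hrecμ := hrec (μ-1) (by omega) (μ-1) (by omega)
        rw [show μ - 1 + 1 = μ from by omega] at hrecμ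
        have e1 : u (μ-1) (μ-1) = 1 := by
          rw [IV (μ-1) (by omega) le_rfl (μ-1) (by omega), if_pos rfl]
        have e2 : u (μ-1) (μ-1-1) = 0 := by
          rw [IV (μ-1) (by omega) le_rfl (μ-1-1) (by omega), if_neg (by omega)]
        have hfμ : u μ (μ-1) = θ' (μ-1) := by
          rw [hrecμ, if_neg (by omega : ¬(μ-1 = 0)), e2, e1, hdd1, mul_one]
          ring
        rw [hfμ, ← hjeq, hθb, hjeq, show μ - (μ-1) = 1 from by omega, pow_one, ← pow_succ']
  -- descent: assuming eventual smallness, smallness propagates all the way down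
  by_contra hcon
  push_neg at hcon
  have descent : ∀ t m, j + 1 ≤ m → M ≤ m + t → ‖u m (μ-1)‖ * c ^ μ < c ^ (m + 1) := by
    intro t
    induction t with
    | zero =>
      intro m hjm hMm
      exact hcon m (by omega)
    | succ t ih =>
      intro m hjm hMm
      by_cases hM : M ≤ m
      · exact hcon m hM
      · push_neg at hM
        have hn1 : 1 ≤ m - j := by omega
        set n := m - j with hndef
        have hnj : n + j = m := by omega
        have hA := Arec n hn1
        have hjr : j ∈ range μ := mem_range.mpr hjμ
        have hsplit : θ' j * u (n + j) (μ-1) = u (n + μ) (μ-1)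
            - (u (n + μ) (μ-1) - ∑ i ∈ range μ, θ' i * u (n + i) (μ-1))
            - ∑ i ∈ (range μ).erase j, θ' i * u (n + i) (μ-1) := by
          rw [← Finset.add_sum_erase _ (fun i => θ' i * u (n + i) (μ-1)) hjr]
          ring
        have hb1 : ‖u (n + μ) (μ-1)‖ < c ^ (n + 1) := by
          have hz := ih (n + μ) (by omega) (by omega)
          have hlt : ‖u (n+μ) (μ-1)‖ * c ^ μ < c ^ (n+1) * c ^ μ := by
            calc ‖u (n+μ) (μ-1)‖ * c ^ μ < c ^ (n + μ + 1) := hz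
              _ = c ^ (n+1) * c ^ μ := by rw [← pow_add]; congr 1; omega
          exact lt_of_mul_lt_mul_right hlt (by positivity)
        have hb2 : ‖u (n + μ) (μ-1) - ∑ i ∈ range μ, θ' i * u (n + i) (μ-1)‖ < c ^ (n + 1) := by
          have h' : ‖u (n + μ) (μ-1) - ∑ i ∈ range μ, θ' i * u (n + i) (μ-1)‖ ≤ c ^ n := by
            refine le_of_mul_le_mul_right ?_ (by positivity : (0:ℝ) < c ^ μ)
            calc _ ≤ c ^ (n + μ) := hA
              _ = c ^ n * c ^ μ := by rw [← pow_add]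
          calc _ ≤ c ^ n := h'
            _ < c ^ (n+1) := by
              rw [pow_succ]
              exact lt_mul_of_one_lt_right (by positivity) hc
        have hb3 : ‖∑ i ∈ (range μ).erase j, θ' i * u (n + i) (μ-1)‖ < c ^ (n + 1) := by
          apply norm_sum_lt _ _ (by positivity)
          intro i hi'
          have hiμ2 : i < μ := mem_range.mp (mem_of_mem_erase hi')
          have hij : i ≠ j := ne_of_mem_erase hi'
          rcases lt_or_gt_of_ne hij with hlt | hgt
          · have hfNS := NS (n + i) (by omega)
            have key : ‖θ' i * u (n+i) (μ-1)‖ * c ^ (μ - 1) < c ^ (n+1) * c ^ (μ-1) := by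
              calc ‖θ' i * u (n+i) (μ-1)‖ * c ^ (μ-1)
                  = ‖θ' i‖ * (‖u (n+i) (μ-1)‖ * c ^ (μ-1)) := by rw [norm_mul, mul_assoc]
                _ ≤ ‖θ' i‖ * c ^ (n+i) := mul_le_mul_of_nonneg_left hfNS (norm_nonneg _)
                _ < c ^ (μ - i) * c ^ (n+i) := mul_lt_mul_of_pos_right (hθc i hlt) (by positivity)
                _ = c ^ (n+1) * c ^ (μ-1) := by rw [← pow_add, ← pow_add]; congr 1; omega
            exact lt_of_mul_lt_mul_right key (by positivity)
          · have hz := ih (n+i) (by omega) (by omega)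
            have key : ‖θ' i * u (n+i) (μ-1)‖ * c ^ μ < c ^ (n+1) * c ^ μ := by
              have s1 : ‖θ' i * u (n+i) (μ-1)‖ * c ^ μ
                  ≤ c ^ (μ - i) * (‖u (n+i) (μ-1)‖ * c ^ μ) := by
                rw [norm_mul, mul_assoc]
                exact mul_le_mul_of_nonneg_right (hθa i hiμ2) (by positivity)
              have s2 : c ^ (μ - i) * (‖u (n+i) (μ-1)‖ * c ^ μ) < c ^ (μ - i) * c ^ (n+i+1) :=
                mul_lt_mul_of_pos_left hz (by positivity)
              have s3 : c ^ (μ - i) * c ^ (n+i+1) = c ^ (n+1) * c ^ μ := by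
                rw [← pow_add, ← pow_add]; congr 1; omega
              linarith
            exact lt_of_mul_lt_mul_right key (by positivity)
        have hfull : ‖θ' j * u (n + j) (μ-1)‖ < c ^ (n+1) := by
          rw [hsplit]
          exact lt_of_le_of_lt (norm_sub_le_max' _ _)
            (max_lt (lt_of_le_of_lt (norm_sub_le_max' _ _) (max_lt hb1 hb2)) hb3)
        have hμsplit : c ^ μ = c ^ (μ - j) * c ^ j := by rw [← pow_add]; congr 1; omega
        calc ‖u m (μ-1)‖ * c ^ μ = (c ^ (μ - j) * ‖u m (μ-1)‖) * c ^ j := by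
              rw [hμsplit]; ring
          _ = ‖θ' j * u (n + j) (μ-1)‖ * c ^ j := by rw [norm_mul, hθb, hnj]
          _ < c ^ (n+1) * c ^ j := mul_lt_mul_of_pos_right hfull (by positivity)
          _ = c ^ (m+1) := by rw [← pow_add]; congr 1; omega
  obtain ⟨m0, hm0j, hm0⟩ := notZ
  exact absurd hm0 (not_le.mpr (descent M m0 hm0j (by omega)))

end Stmt2Aux

open Stmt2Aux

/-- If the differential module is regular (limsup ‖Gₙ‖^{1/n} ≤ 1), then the matrix of the
operator in any cyclic basis has norm ≤ 1, i.e. |θ_j| ≤ 1 for all j. -/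
theorem stmt_2 {F : Type*} [NormedField F] [IsUltrametricDist F] [CompleteSpace F]
    (dd : F → F)
    (hddadd : ∀ f g : F, dd (f + g) = dd f + dd g)
    (hddmul : ∀ f g : F, dd (f * g) = f * dd g + g * dd f)
    (hddnorm : ∀ f : F, ‖dd f‖ ≤ ‖f‖)
    (μ : ℕ) (hμ : 1 ≤ μ) (θ : Fin μ → F)
    (G1 : Matrix (Fin μ) (Fin μ) F)
    (hG1 : ∀ i j : Fin μ, G1 i j =
      if (j : ℕ) = μ - 1 then θ i else if (i : ℕ) = (j : ℕ) + 1 then 1 else 0)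
    (G : ℕ → Matrix (Fin μ) (Fin μ) F)
    (hGone : G 1 = G1)
    (hGsucc : ∀ n : ℕ, 1 ≤ n → G (n + 1) = G1 * G n + (G n).map dd)
    (hreg : Filter.limsup
        (fun n : ℕ => (⨆ p : Fin μ × Fin μ, ‖G n p.1 p.2‖) ^ ((n : ℝ)⁻¹)) Filter.atTop ≤ 1) :
    ∀ j : Fin μ, ‖θ j‖ ≤ 1 := by
  classical
  by_contra hcon1
  push_neg at hcon1
  obtain ⟨j0, hj0⟩ := hcon1
  have hμ0 : 0 < μ := hμ
  have hμ1 : μ - 1 < μ := by omega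
  -- basic facts about dd
  have hdd0 : dd 0 = 0 := by
    have h := hddnorm 0
    rw [norm_zero] at h
    exact norm_le_zero_iff.mp h
  have hdd1 : dd 1 = 0 := by
    have h := hddmul 1 1
    simp only [one_mul] at h
    exact left_eq_add.mp h
  -- ℕ-indexed coefficients
  set θ' : ℕ → F := fun i => if h : i < μ then θ ⟨i, h⟩ else 0 with hθ'def
  have hθ'eq : ∀ (i : ℕ) (hi : i < μ), θ' i = θ ⟨i, hi⟩ := fun i hi => dif_pos hi
  -- the growth rate c
  have hne : (range μ).Nonempty := nonempty_range_iff.mpr (by omega)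
  set r : ℕ → ℝ := fun i => ‖θ' i‖ ^ (((μ : ℝ) - i)⁻¹) with hrdef
  set c : ℝ := (range μ).sup' hne r with hcdef
  have hrc : ∀ i, i < μ → r i ≤ c := fun i hi => le_sup' r (mem_range.mpr hi)
  have hrval : ∀ i, i < μ → ‖θ' i‖ = (r i) ^ (μ - i) := by
    intro i hi
    have hcast : ((μ - i : ℕ) : ℝ) = (μ:ℝ) - i := by
      push_cast [Nat.cast_sub hi.le]
      ring
    have hne0 : ((μ:ℝ) - i) ≠ 0 := by
      have : (i:ℝ) < (μ:ℝ) := by exact_mod_cast hi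
      linarith
    calc ‖θ' i‖ = ‖θ' i‖ ^ (1:ℝ) := (Real.rpow_one _).symm
      _ = ‖θ' i‖ ^ ((((μ:ℝ) - i)⁻¹) * ((μ - i : ℕ):ℝ)) := by
          rw [hcast, inv_mul_cancel₀ hne0]
      _ = (‖θ' i‖ ^ (((μ:ℝ) - i)⁻¹)) ^ ((μ - i : ℕ):ℝ) := Real.rpow_mul (norm_nonneg _) _ _
      _ = (r i) ^ (μ - i) := by rw [Real.rpow_natCast]
  have hθj0 : θ' (j0 : ℕ) = θ j0 := by
    rw [hθ'eq (j0 : ℕ) j0.isLt]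
  have hc : 1 < c := by
    have h1 : (1:ℝ) < r (j0 : ℕ) := by
      rw [hrdef]
      simp only []
      rw [hθj0]
      rw [Real.one_lt_rpow_iff_of_pos (lt_trans one_pos hj0)]
      left
      constructor
      · exact hj0
      · have : ((j0:ℕ):ℝ) < (μ:ℝ) := by exact_mod_cast j0.isLt
        simp only [inv_pos]
        linarith
    exact lt_of_lt_of_le h1 (hrc (j0 : ℕ) j0.isLt)
  have hc0 : (0:ℝ) < c := lt_trans one_pos hc
  have hθa : ∀ i, i < μ → ‖θ' i‖ ≤ c ^ (μ - i) := by
    intro i hi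
    rw [hrval i hi]
    exact pow_le_pow_left₀ (Real.rpow_nonneg (norm_nonneg _) _) (hrc i hi) _
  -- choose the minimal index attaining the sup
  have hex : ∃ i, i < μ ∧ ‖θ' i‖ = c ^ (μ - i) := by
    obtain ⟨b, hb, hbeq⟩ := Finset.exists_mem_eq_sup' hne r
    refine ⟨b, mem_range.mp hb, ?_⟩
    rw [hrval b (mem_range.mp hb), ← hbeq]
  set j : ℕ := Nat.find hex with hjdef
  obtain ⟨hjμ, hθb⟩ := Nat.find_spec hex
  have hθc : ∀ i, i < j → ‖θ' i‖ < c ^ (μ - i) := by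
    intro i hij
    have hiμ : i < μ := by omega
    have hne' := Nat.find_min hex hij
    push_neg at hne'
    exact lt_of_le_of_ne (hθa i hiμ) (hne' hiμ)
  -- entrywise recursion for the matrices
  set lastF : Fin μ := ⟨μ - 1, hμ1⟩ with hlastdef
  have hcol : ∀ n, 1 ≤ n → ∀ q i : Fin μ, G (n+1) i q =
      (if h : (i:ℕ) = 0 then 0 else G n ⟨(i:ℕ)-1, by omega⟩ q)
        + θ i * G n lastF q + dd (G n i q) := by
    intro n hn q i
    rw [hGsucc n hn]
    rw [Matrix.add_apply, Matrix.map_apply, Matrix.mul_apply]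
    congr 1
    have hterm : ∀ k : Fin μ, G1 i k * G n k q =
        (if k = lastF then θ i * G n k q else 0)
          + (if (i:ℕ) = (k:ℕ)+1 then G n k q else 0) := by
      intro k
      rw [hG1 i k]
      by_cases h1 : (k:ℕ) = μ - 1
      · have hkl : k = lastF := Fin.ext (by simpa using h1)
        have h2 : ¬((i:ℕ) = (k:ℕ)+1) := by
          have := i.isLt
          omega
        rw [if_pos h1, if_pos hkl, if_neg h2, add_zero]
      · have hkl : ¬(k = lastF) := by
          intro hk
          rw [hk] at h1
          exact h1 rfl
        rw [if_neg h1, if_neg hkl, zero_add]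
        by_cases h2 : (i:ℕ) = (k:ℕ)+1
        · rw [if_pos h2, if_pos h2, one_mul]
        · rw [if_neg h2, if_neg h2, zero_mul]
    rw [Finset.sum_congr rfl (fun k _ => hterm k), Finset.sum_add_distrib, add_comm]
    congr 1
    · by_cases h0 : (i:ℕ) = 0
      · rw [dif_pos h0]
        apply Finset.sum_eq_zero
        intro k _
        rw [if_neg (by omega)]
      · rw [dif_neg h0]
        have hiff : ∀ k : Fin μ, ((i:ℕ) = (k:ℕ)+1) ↔ (k = ⟨(i:ℕ)-1, by omega⟩) := by
          intro k
          rw [Fin.ext_iff]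
          simp only [Fin.val_mk]
          omega
        calc ∑ k : Fin μ, (if (i:ℕ) = (k:ℕ)+1 then G n k q else 0)
            = ∑ k : Fin μ, (if k = (⟨(i:ℕ)-1, by omega⟩ : Fin μ) then G n k q else 0) :=
              Finset.sum_congr rfl (fun k _ => by rw [if_congr (hiff k) rfl rfl])
          _ = G n ⟨(i:ℕ)-1, by omega⟩ q := by
              rw [Finset.sum_ite_eq']
              exact if_pos (mem_univ _)
    · rw [Finset.sum_ite_eq']
      exact if_pos (mem_univ _)
  -- column functions
  set w : Fin μ → ℕ → ℕ → F :=
    fun q n i => if h : i < μ then G n ⟨i, h⟩ q else 0 with hwdef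
  have hweq : ∀ (q : Fin μ) (n : ℕ) (i : ℕ) (hi : i < μ), w q n i = G n ⟨i, hi⟩ q :=
    fun q n i hi => dif_pos hi
  have hwrec : ∀ q : Fin μ, ∀ n, 1 ≤ n → ∀ i, i < μ →
      w q (n+1) i = (if i = 0 then 0 else w q n (i-1)) + θ' i * w q n (μ-1) + dd (w q n i) := by
    intro q n hn i hi
    rw [hweq q (n+1) i hi]
    have hthis := hcol n hn q ⟨i, hi⟩
    simp only [Fin.val_mk] at hthis
    rw [hthis]
    congr 1
    · congr 1
      · by_cases h0 : i = 0
        · rw [dif_pos h0, if_pos h0]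
        · rw [dif_neg h0, if_neg h0, hweq q n (i-1) (by omega)]
      · rw [hθ'eq i hi, hweq q n (μ-1) hμ1]
    · rw [hweq q n i hi]
  -- global bound for all columns
  have hbase_all : ∀ q : Fin μ, ∀ i, i < μ → ‖w q 1 i‖ * c ^ i ≤ c ^ μ := by
    intro q i hi
    rw [hweq q 1 i hi, hGone, hG1]
    by_cases hq : (q:ℕ) = μ - 1
    · rw [if_pos hq, ← hθ'eq i hi]
      calc ‖θ' i‖ * c ^ i ≤ c ^ (μ - i) * c ^ i :=
            mul_le_mul_of_nonneg_right (hθa i hi) (by positivity)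
        _ = c ^ μ := by rw [← pow_add]; congr 1; omega
    · rw [if_neg hq]
      by_cases h2 : (i:ℕ) = (q:ℕ)+1
      · rw [if_pos h2, norm_one, one_mul]
        exact pow_le_pow_right₀ hc.le (by omega)
      · rw [if_neg h2, norm_zero, zero_mul]
        positivity
  have hwbnd_all : ∀ q : Fin μ, ∀ n, 1 ≤ n → ∀ i, i < μ →
      ‖w q n i‖ * c ^ i ≤ c ^ (n - 1 + μ) :=
    fun q => Stmt2Aux.wbound μ θ' dd hddnorm c hc hθa (w q) (hwrec q) μ (hbase_all q)
  -- the zero column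
  set q0 : Fin μ := ⟨0, hμ0⟩ with hq0def
  have hinit0 : ∀ i, i < μ → w q0 1 i = if μ - 1 = 0 then θ' i else if i = 1 then 1 else 0 := by
    intro i hi
    rw [hweq q0 1 i hi, hGone, hG1]
    by_cases hμ' : μ - 1 = 0
    · rw [if_pos (show ((q0:ℕ) = μ - 1) from by simp only [hq0def, Fin.val_mk]; omega),
        if_pos hμ', hθ'eq i hi]
    · rw [if_neg (show ¬((q0:ℕ) = μ - 1) from by simp only [hq0def, Fin.val_mk]; omega),
        if_neg hμ']
  have hbase0 : ∀ i, i < μ → ‖w q0 1 i‖ * c ^ i ≤ c ^ 1 := by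
    intro i hi
    rw [hinit0 i hi]
    by_cases hμ' : μ - 1 = 0
    · have hi0 : i = 0 := by omega
      subst hi0
      rw [if_pos hμ', pow_zero, mul_one]
      have := hθa 0 (by omega)
      rwa [show μ - 0 = 1 from by omega] at this
    · rw [if_neg hμ']
      by_cases h2 : i = 1
      · rw [if_pos h2, norm_one, one_mul, h2, pow_one]
      · rw [if_neg h2, norm_zero, zero_mul]
        positivity
  have hwbnd0 : ∀ n, 1 ≤ n → ∀ i, i < μ → ‖w q0 n i‖ * c ^ i ≤ c ^ n := by
    intro n hn i hi
    have := Stmt2Aux.wbound μ θ' dd hddnorm c hc hθa (w q0) (hwrec q0) 1 hbase0 n hn i hi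
    rwa [show n - 1 + 1 = n from by omega] at this
  -- apply the core result
  have hfreq : ∀ M : ℕ, ∃ m, M ≤ m ∧ c ^ (m + 1) ≤ ‖w q0 m (μ-1)‖ * c ^ μ :=
    Stmt2Aux.core μ hμ θ' dd hddnorm hdd0 hdd1 c hc hθa j hjμ hθb hθc (w q0)
      (hwrec q0) hinit0 hwbnd0
  -- the limsup contradiction
  set S : ℕ → ℝ := fun n => ⨆ p : Fin μ × Fin μ, ‖G n p.1 p.2‖ with hSdef
  have hSle : ∀ n (i q : Fin μ), ‖G n i q‖ ≤ S n := by
    intro n i q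
    exact le_ciSup (f := fun p : Fin μ × Fin μ => ‖G n p.1 p.2‖)
      (Set.Finite.bddAbove (Set.finite_range _)) (⟨i, q⟩ : Fin μ × Fin μ)
  have hS0 : ∀ n, 0 ≤ S n := fun n => le_trans (norm_nonneg _) (hSle n lastF q0)
  haveI : Nonempty (Fin μ × Fin μ) := ⟨(q0, q0)⟩
  have hSup : ∀ n, 1 ≤ n → S n ≤ c ^ (n - 1 + μ) := by
    intro n hn
    apply ciSup_le
    intro p
    have h1 := hwbnd_all p.2 n hn (p.1 : ℕ) p.1.isLt
    rw [hweq p.2 n (p.1 : ℕ) p.1.isLt] at h1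
    have h2 : ‖G n ⟨(p.1:ℕ), p.1.isLt⟩ p.2‖ ≤ ‖G n ⟨(p.1:ℕ), p.1.isLt⟩ p.2‖ * c ^ (p.1:ℕ) :=
      le_mul_of_one_le_right (norm_nonneg _) (one_le_pow₀ hc.le)
    calc ‖G n p.1 p.2‖ = ‖G n ⟨(p.1:ℕ), p.1.isLt⟩ p.2‖ := by congr
      _ ≤ c ^ (n - 1 + μ) := le_trans h2 h1
  -- upper boundedness of the sequence
  have hpowinv : ∀ (x : ℝ), 0 ≤ x → ∀ n : ℕ, 1 ≤ n → (x ^ n) ^ ((n:ℝ)⁻¹) = x := by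
    intro x hx n hn
    rw [← Real.rpow_natCast x n, ← Real.rpow_mul hx,
      mul_inv_cancel₀ (Nat.cast_ne_zero.mpr (by omega) : ((n:ℕ):ℝ) ≠ 0), Real.rpow_one]
  have hbddabove : ∀ᶠ n in atTop, S n ^ ((n:ℝ)⁻¹) ≤ c ^ μ := by
    rw [eventually_atTop]
    refine ⟨1, fun n hn => ?_⟩
    have hmn : n - 1 + μ ≤ μ * n := by
      rcases Nat.exists_eq_add_of_le hn with ⟨m, rfl⟩
      have h := Nat.le_mul_of_pos_left m hμ0
      have h2 : μ * (1 + m) = μ + μ * m := by ring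
      omega
    have h1 : S n ≤ (c ^ μ) ^ n := by
      refine le_trans (hSup n hn) ?_
      rw [← pow_mul]
      exact pow_le_pow_right₀ hc.le hmn
    calc S n ^ ((n:ℝ)⁻¹) ≤ ((c ^ μ) ^ n) ^ ((n:ℝ)⁻¹) :=
          Real.rpow_le_rpow (hS0 n) h1 (by positivity)
      _ = c ^ μ := hpowinv _ (by positivity) n hn
  have hBdd : Filter.IsBoundedUnder (· ≤ ·) atTop (fun n : ℕ => S n ^ ((n:ℝ)⁻¹)) :=
    Filter.isBoundedUnder_of_eventually_le hbddabove
  -- frequently large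
  have hfr : ∃ᶠ n in atTop, c ^ ((2:ℝ)⁻¹) ≤ S n ^ ((n:ℝ)⁻¹) := by
    rw [frequently_atTop]
    intro a
    obtain ⟨m, hm1, hm2⟩ := hfreq (a + 2*μ + 2)
    refine ⟨m, by omega, ?_⟩
    have hm0 : 1 ≤ m := by omega
    have hfm : c ^ (m + 1 - μ) ≤ ‖w q0 m (μ-1)‖ := by
      have hsplit : c ^ (m+1) = c ^ (m + 1 - μ) * c ^ μ := by
        rw [← pow_add]
        congr 1
        omega
      rw [hsplit] at hm2
      exact le_of_mul_le_mul_right hm2 (by positivity)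
    have hSm : c ^ (m + 1 - μ) ≤ S m := by
      refine le_trans hfm ?_
      rw [hweq q0 m (μ-1) hμ1]
      exact hSle m lastF q0
    have h1 : (c ^ (m+1-μ)) ^ ((m:ℝ)⁻¹) ≤ S m ^ ((m:ℝ)⁻¹) :=
      Real.rpow_le_rpow (by positivity) hSm (by positivity)
    refine le_trans ?_ h1
    rw [← Real.rpow_natCast c (m+1-μ), ← Real.rpow_mul hc0.le,
      Real.rpow_le_rpow_left_iff hc, ← div_eq_mul_inv]
    rw [show ((2:ℝ)⁻¹) = 1/2 by norm_num, div_le_div_iff₀ (by norm_num)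
      (by exact_mod_cast hm0 : (0:ℝ) < (m:ℝ))]
    have hk2 : (m:ℝ) ≤ ((m+1-μ:ℕ):ℝ) * 2 := by
      exact_mod_cast (show m ≤ (m+1-μ)*2 from by omega)
    linarith
  -- conclude
  have hreg' : Filter.limsup (fun n : ℕ => S n ^ ((n : ℝ)⁻¹)) Filter.atTop ≤ 1 := by
    simp only [hSdef]
    exact hreg
  have hls := Filter.le_limsup_of_frequently_le hfr hBdd
  have hgt1 : (1:ℝ) < c ^ ((2:ℝ)⁻¹) := by
    rw [Real.one_lt_rpow_iff_of_pos hc0]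
    left
    exact ⟨hc, by norm_num⟩
  linarith [le_trans hls hreg']
end

section
/- Assume that ρ := max_{0 ≤ j ≤ μ−1} (−v(θ_j))/(μ−j) is a positive integer (with the convention that the term for θ_j = 0 is omitted). Let Δ = diag(1, x^ρ, x^{2ρ}, …, x^{(μ−1)ρ}). Then every entry of the matrix B = x^ρ·(Δ^{−1}·G_1·Δ + Δ^{−1}·∂(Δ)) lies in K[[x]], and the matrix B(0) ∈ M_μ(K) obtained by taking the constant coefficient of every entry of B is not nilpotent. -/
/-!
Conjugating by `Δ` multiplies the `(i, j)` entry of `G₁` by `x^{ρ(j-i)}`, and `Δ⁻¹ ∂Δ` is the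
diagonal matrix `diag(0, ρ, …, (μ-1)ρ)`. Hence `B` is the companion matrix with last column
`x^{ρ(μ-i)} θ_i` plus `diag(iρ x^ρ)`. By the choice of `ρ` the entries `x^{ρ(μ-i)} θ_i` lie in
`K[[x]]` and, for an index attaining the maximum, have nonzero constant term; so `B(0)` is the
companion matrix of a nonzero column. Such a matrix is not nilpotent: `e₀` is a cyclic vector,
`B(0)^k e₀ = e_k` for `k < μ` and `B(0)^μ e₀` is the last column, while a nilpotent `μ × μ`
matrix over a reduced ring satisfies `M^μ = 0` by Cayley–Hamilton.
-/

open Matrix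

def companionMatrix {R : Type*} [Zero R] [One R] {μ : ℕ} (c : Fin μ → R) :
    Matrix (Fin μ) (Fin μ) R :=
  Matrix.of fun i j => if (j : ℕ) = μ - 1 then c i else if (i : ℕ) = (j : ℕ) + 1 then 1 else 0

namespace companionMatrix

variable {R : Type*} {μ : ℕ}

theorem apply_mem [Zero R] [One R] {c : Fin μ → R} {S : Set R} (h0 : 0 ∈ S) (h1 : 1 ∈ S)
    (hc : ∀ i, c i ∈ S) (i j : Fin μ) : companionMatrix c i j ∈ S := by
  simp only [companionMatrix, of_apply]
  split_ifs
  exacts [hc i, h1, h0]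

theorem map [Zero R] [One R] {S : Type*} [Zero S] [One S] (c : Fin μ → R) {f : R → S}
    (h0 : f 0 = 0) (h1 : f 1 = 1) : (companionMatrix c).map f = companionMatrix fun i ↦ f (c i) := by
  ext i j
  simp only [companionMatrix, map_apply, of_apply]
  split_ifs <;> simp [h0, h1]

variable [Semiring R] (c : Fin μ → R)

theorem mulVec_single_of_lt (k : Fin μ) (hk : (k : ℕ) + 1 < μ) :
    companionMatrix c *ᵥ Pi.single k 1 = Pi.single ⟨k + 1, hk⟩ 1 := by
  ext i
  simp only [mulVec_single_one, col_apply, companionMatrix, of_apply, Pi.single_apply, Fin.ext_iff]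
  rw [if_neg (by omega)]

theorem mulVec_single_last (hμ : 0 < μ) :
    companionMatrix c *ᵥ Pi.single ⟨μ - 1, by omega⟩ 1 = c := by
  ext i
  simp [companionMatrix]

theorem pow_mulVec_single_zero (hμ : 0 < μ) (k : ℕ) (hk : k < μ) :
    companionMatrix c ^ k *ᵥ Pi.single ⟨0, hμ⟩ 1 = Pi.single ⟨k, hk⟩ 1 := by
  induction k with
  | zero => rw [pow_zero, one_mulVec]
  | succ k ih =>
    rw [pow_succ', ← mulVec_mulVec, ih (by omega), mulVec_single_of_lt c _ hk]

theorem pow_card_mulVec_single_zero (hμ : 0 < μ) :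
    companionMatrix c ^ μ *ᵥ Pi.single ⟨0, hμ⟩ 1 = c := by
  have hsucc : companionMatrix c ^ μ = companionMatrix c * companionMatrix c ^ (μ - 1) := by
    rw [← pow_succ', Nat.sub_add_cancel hμ]
  rw [hsucc, ← mulVec_mulVec, pow_mulVec_single_zero c hμ (μ - 1) (by omega)]
  exact mulVec_single_last c hμ

end companionMatrix

theorem Matrix.pow_card_eq_zero_of_isNilpotent {R n : Type*} [CommRing R] [IsReduced R]
    [Fintype n] [DecidableEq n] {M : Matrix n n R} (hM : IsNilpotent M) :
    M ^ Fintype.card n = 0 := by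
  have hchar : M.charpoly = Polynomial.X ^ Fintype.card n :=
    sub_eq_zero.mp <| Polynomial.ext fun k ↦
      (Polynomial.isNilpotent_iff.mp (isNilpotent_charpoly_sub_pow_of_isNilpotent hM) k).eq_zero
  simpa [hchar] using M.aeval_self_charpoly

theorem not_isNilpotent_companionMatrix {R : Type*} [CommRing R] [IsReduced R] {μ : ℕ}
    {c : Fin μ → R} (hc : c ≠ 0) : ¬ IsNilpotent (companionMatrix c) := by
  intro hnil
  have hμ : 0 < μ := Nat.pos_of_ne_zero fun h ↦ hc (by subst h; exact Subsingleton.elim _ _)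
  apply hc
  have hpow := Matrix.pow_card_eq_zero_of_isNilpotent hnil
  rw [Fintype.card_fin] at hpow
  rw [← companionMatrix.pow_card_mulVec_single_zero c hμ, hpow, zero_mulVec]

theorem neg_intCast_div_le_iff {a d ρ : ℤ} (hd : 0 < d) :
    -(a : ℚ) / d ≤ ρ ↔ -(ρ * d) ≤ a := by
  rw [div_le_iff₀ (by exact_mod_cast hd), neg_le]
  exact_mod_cast Iff.rfl

theorem neg_intCast_div_eq_iff {a d ρ : ℤ} (hd : 0 < d) :
    -(a : ℚ) / d = ρ ↔ a = -(ρ * d) := by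
  rw [div_eq_iff (by exact_mod_cast hd.ne'), neg_eq_iff_eq_neg]
  exact_mod_cast Iff.rfl

namespace LaurentSeries

variable {R : Type*} {μ : ℕ}

section Semiring

variable [Semiring R]

theorem coeff_single_one_mul_of_neg {f : LaurentSeries R} {e n : ℤ}
    (hf : f ≠ 0 → -e ≤ f.order) (hn : n < 0) : (HahnSeries.single e 1 * f).coeff n = 0 := by
  rw [HahnSeries.coeff_single_mul, one_mul]
  by_cases hf0 : f = 0
  · rw [hf0, HahnSeries.coeff_zero]
  · exact HahnSeries.coeff_eq_zero_of_lt_order (by linarith [hf hf0])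

theorem coeff_zero_single_one_mul_ne_zero {f : LaurentSeries R} {e : ℤ} (hf : f ≠ 0)
    (he : f.order = -e) : (HahnSeries.single e 1 * f).coeff 0 ≠ 0 := by
  rw [HahnSeries.coeff_single_mul, one_mul, zero_sub, ← he]
  exact HahnSeries.coeff_order_eq_zero.not.mpr hf

theorem coeff_companionMatrix_apply_of_neg {c : Fin μ → LaurentSeries R}
    (hc : ∀ i, ∀ n < 0, (c i).coeff n = 0) (i j : Fin μ) {n : ℤ} (hn : n < 0) :
    (companionMatrix c i j).coeff n = 0 :=
  companionMatrix.apply_mem (S := {f : LaurentSeries R | ∀ n < 0, f.coeff n = 0})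
    (fun _ _ ↦ HahnSeries.coeff_zero) (fun m hm ↦ by simp [HahnSeries.coeff_one, hm.ne]) hc
    i j n hn

end Semiring

variable [CommRing R]

theorem single_smul_shear_companionMatrix (ρ : ℤ) (θ : Fin μ → LaurentSeries R) :
    (HahnSeries.single ρ 1 : LaurentSeries R) •
        (diagonal (fun i : Fin μ => HahnSeries.single (-(ρ * ((i : ℕ) : ℤ))) 1) *
          companionMatrix θ * diagonal (fun i : Fin μ => HahnSeries.single (ρ * ((i : ℕ) : ℤ)) 1)) =
      companionMatrix fun i => HahnSeries.single (ρ * ((μ : ℤ) - ((i : ℕ) : ℤ))) 1 * θ i := by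
  refine Matrix.ext fun i j => ?_
  simp only [Matrix.smul_apply, smul_eq_mul, mul_diagonal, diagonal_mul, companionMatrix, of_apply]
  split_ifs with hlast hsub
  · have hexp : ρ + -(ρ * ((i : ℕ) : ℤ)) + ρ * ((j : ℕ) : ℤ) = ρ * ((μ : ℤ) - ((i : ℕ) : ℤ)) := by
      push_cast [hlast, Nat.cast_sub (Nat.one_le_of_lt j.isLt)]
      ring
    rw [mul_right_comm, ← mul_assoc, ← mul_assoc, HahnSeries.single_mul_single,
      HahnSeries.single_mul_single, hexp, mul_one, mul_one]
  · rw [mul_one, HahnSeries.single_mul_single, HahnSeries.single_mul_single, mul_one, mul_one]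
    have hi : ((i : ℕ) : ℤ) = (j : ℕ) + 1 := by omega
    simp [hi, mul_add]
  · simp

theorem single_smul_shear_derivation {dd : LaurentSeries R → LaurentSeries R}
    (hdd : ∀ (f : LaurentSeries R) (n : ℤ), (dd f).coeff n = n • f.coeff n) (ρ : ℤ) :
    (HahnSeries.single ρ 1 : LaurentSeries R) •
        (diagonal (fun i : Fin μ => HahnSeries.single (-(ρ * ((i : ℕ) : ℤ))) 1) *
          (diagonal fun i : Fin μ => HahnSeries.single (ρ * ((i : ℕ) : ℤ)) 1).map dd) =
      diagonal fun i : Fin μ => HahnSeries.single ρ ((ρ * ((i : ℕ) : ℤ)) • (1 : R)) := by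
  have hdd_single (a : ℤ) (r : R) : dd (HahnSeries.single a r) = HahnSeries.single a (a • r) := by
    ext n
    rw [hdd, HahnSeries.coeff_single, HahnSeries.coeff_single]
    split_ifs with h <;> simp [h]
  have hdd_zero : dd 0 = 0 := by
    ext n
    simp [hdd]
  rw [diagonal_map hdd_zero, diagonal_mul_diagonal, ← diagonal_smul]
  congr 1
  ext1 i
  rw [Pi.smul_apply, hdd_single, HahnSeries.single_mul_single, smul_eq_mul,
    HahnSeries.single_mul_single]
  simp

end LaurentSeries

theorem stmt_3_general {K : Type*} [Field K]
    (dd : LaurentSeries K → LaurentSeries K)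
    (hdd : ∀ (f : LaurentSeries K) (n : ℤ), (dd f).coeff n = n • f.coeff n)
    (μ : ℕ) (θ : Fin μ → LaurentSeries K)
    (G1 : Matrix (Fin μ) (Fin μ) (LaurentSeries K))
    (hG1 : ∀ i j : Fin μ, G1 i j =
      if (j : ℕ) = μ - 1 then θ i else if (i : ℕ) = (j : ℕ) + 1 then 1 else 0)
    (ρ : ℕ) (hρpos : 1 ≤ ρ)
    (hρub : ∀ j : Fin μ, θ j ≠ 0 →
      (-(((θ j).order : ℚ))) / ((μ : ℚ) - ((j : ℕ) : ℚ)) ≤ (ρ : ℚ))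
    (hρmax : ∃ j : Fin μ, θ j ≠ 0 ∧
      (-(((θ j).order : ℚ))) / ((μ : ℚ) - ((j : ℕ) : ℚ)) = (ρ : ℚ))
    (Δ Δinv : Matrix (Fin μ) (Fin μ) (LaurentSeries K))
    (hΔ : Δ = Matrix.diagonal fun i : Fin μ =>
      (HahnSeries.single ((ρ : ℤ) * ((i : ℕ) : ℤ)) 1 : LaurentSeries K))
    (hΔinv : Δinv = Matrix.diagonal fun i : Fin μ =>
      (HahnSeries.single (-((ρ : ℤ) * ((i : ℕ) : ℤ))) 1 : LaurentSeries K))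
    (B : Matrix (Fin μ) (Fin μ) (LaurentSeries K))
    (hB : B = (HahnSeries.single (ρ : ℤ) 1 : LaurentSeries K) •
      (Δinv * G1 * Δ + Δinv * (Δ.map dd))) :
    (∀ i j : Fin μ, ∀ n : ℤ, n < 0 → (B i j).coeff n = 0) ∧
      ¬ IsNilpotent (Matrix.of fun i j : Fin μ => (B i j).coeff 0) := by
  set φ : Fin μ → LaurentSeries K := fun i =>
    HahnSeries.single ((ρ : ℤ) * ((μ : ℤ) - ((i : ℕ) : ℤ))) 1 * θ i
  have hdiv : ∀ i : Fin μ, (μ : ℚ) - ((i : ℕ) : ℚ) = (((μ : ℤ) - ((i : ℕ) : ℤ) : ℤ) : ℚ) :=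
    fun i ↦ by push_cast; ring
  have hBeq : B = companionMatrix φ +
      diagonal fun i : Fin μ => HahnSeries.single (ρ : ℤ) (((ρ : ℤ) * ((i : ℕ) : ℤ)) • (1 : K)) := by
    have hG : G1 = companionMatrix θ := Matrix.ext hG1
    rw [hB, hΔ, hΔinv, hG, smul_add, LaurentSeries.single_smul_shear_companionMatrix,
      LaurentSeries.single_smul_shear_derivation hdd]
  have hBcoeff : ∀ n : ℤ, n ≠ ρ → ∀ i j, (B i j).coeff n = (companionMatrix φ i j).coeff n := by
    intro n hn i j
    rw [hBeq, Matrix.add_apply, HahnSeries.coeff_add, diagonal_apply]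
    split_ifs <;> simp [hn]
  have hφ_neg : ∀ k, ∀ n < 0, (φ k).coeff n = 0 := by
    intro k n hn
    refine LaurentSeries.coeff_single_one_mul_of_neg (fun hk ↦ ?_) hn
    have hk_bound := hρub k hk
    rwa [hdiv, ← Int.cast_natCast ρ, neg_intCast_div_le_iff (by omega)] at hk_bound
  refine ⟨fun i j n hn ↦ ?_, ?_⟩
  · rw [hBcoeff n (by omega)]
    exact LaurentSeries.coeff_companionMatrix_apply_of_neg hφ_neg i j hn
  · have hB0 : of (fun i j ↦ (B i j).coeff 0) = companionMatrix fun i ↦ (φ i).coeff 0 := by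
      rw [← companionMatrix.map φ (f := fun g ↦ g.coeff 0) HahnSeries.coeff_zero (by simp)]
      ext i j
      rw [of_apply, map_apply, hBcoeff 0 (by omega)]
    rw [hB0]
    obtain ⟨j, hj, hjρ⟩ := hρmax
    refine not_isNilpotent_companionMatrix (Function.ne_iff.mpr ⟨j, ?_⟩)
    rw [hdiv, ← Int.cast_natCast ρ, neg_intCast_div_eq_iff (by omega)] at hjρ
    exact LaurentSeries.coeff_zero_single_one_mul_ne_zero hj hjρ

/-- Turrittin–Katz, part 2: if the Poincaré–Katz rank ρ is a positive integer, then after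
the shearing by Δ = diag(1, x^ρ, …, x^{(μ−1)ρ}), the matrix x^ρ·(Δ⁻¹G₁Δ + Δ⁻¹∂Δ) has
entries in K[[x]] and non-nilpotent reduction at x = 0. -/
theorem stmt_3 {K : Type*} [Field K]
    (dd : LaurentSeries K → LaurentSeries K)
    (hdd : ∀ (f : LaurentSeries K) (n : ℤ), (dd f).coeff n = n • f.coeff n)
    (μ : ℕ) (hμ : 1 ≤ μ) (θ : Fin μ → LaurentSeries K)
    (G1 : Matrix (Fin μ) (Fin μ) (LaurentSeries K))
    (hG1 : ∀ i j : Fin μ, G1 i j =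
      if (j : ℕ) = μ - 1 then θ i else if (i : ℕ) = (j : ℕ) + 1 then 1 else 0)
    (ρ : ℕ) (hρpos : 1 ≤ ρ)
    (hρub : ∀ j : Fin μ, θ j ≠ 0 →
      (-(((θ j).order : ℚ))) / ((μ : ℚ) - ((j : ℕ) : ℚ)) ≤ (ρ : ℚ))
    (hρmax : ∃ j : Fin μ, θ j ≠ 0 ∧
      (-(((θ j).order : ℚ))) / ((μ : ℚ) - ((j : ℕ) : ℚ)) = (ρ : ℚ))
    (Δ Δinv : Matrix (Fin μ) (Fin μ) (LaurentSeries K))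
    (hΔ : Δ = Matrix.diagonal fun i : Fin μ =>
      (HahnSeries.single ((ρ : ℤ) * ((i : ℕ) : ℤ)) 1 : LaurentSeries K))
    (hΔinv : Δinv = Matrix.diagonal fun i : Fin μ =>
      (HahnSeries.single (-((ρ : ℤ) * ((i : ℕ) : ℤ))) 1 : LaurentSeries K))
    (B : Matrix (Fin μ) (Fin μ) (LaurentSeries K))
    (hB : B = (HahnSeries.single (ρ : ℤ) 1 : LaurentSeries K) •
      (Δinv * G1 * Δ + Δinv * (Δ.map dd))) :
    (∀ i j : Fin μ, ∀ n : ℤ, n < 0 → (B i j).coeff n = 0) ∧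
      ¬ IsNilpotent (Matrix.of fun i j : Fin μ => (B i j).coeff 0) :=
  stmt_3_general dd hdd μ θ G1 hG1 ρ hρpos hρub hρmax Δ Δinv hΔ hΔinv B hB
end

section
/- Let F be a field and ∂ : F → F an additive map satisfying the Leibniz rule ∂(fg) = f·∂(g) + g·∂(f), such that ∂(x) = 1 for some x ∈ F. Let M be an F-vector space of finite dimension μ and D : M → M an additive map with D(f·m) = ∂(f)·m + f·D(m) for all f ∈ F, m ∈ M. If char F = 0 or μ ≤ char F, then there exists m ∈ M such that (m, D(m), …, D^{μ−1}(m)) is a basis of M (a cyclic basis). -/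
/-!
Given `e` with `e, D e, …, D^{k-1} e` independent and `k < μ`, suppose no `v` has
`v, D v, …, D^k v` independent. Pick `f` outside the span of the `D^i e` and an alternating
`(k+1)`-form `Φ` not vanishing on `(e, …, D^{k-1} e, f)`. Then `Φ (v, D v, …, D^k v) = 0` for all
`v`; taking `v = e + t g`
for the infinitely many constants `t` shows that the derivative of `Φ` at `(D^i e)_i` kills
`(D^i g)_i` for every `g`. For `g = h f` the Leibniz rule turns this into
`∑_{r ≤ k} ∂^r h · S_r = 0` with `S_r` independent of `h`. Testing against `h = x^j`, where
`∂^r x^j = j!/(j-r)! · x^{j-r}`, gives `S_r = 0` for `r ≤ k` since these factorials are nonzero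
in `F`; but `S_k = Φ (e, …, D^{k-1} e, f) ≠ 0`.
-/

open Function Finset Polynomial Module
open scoped Nat

theorem Nat.cast_factorial_ne_zero_of_lt {K : Type*} [Field K] {n j : ℕ}
    (hchar : ringChar K = 0 ∨ n ≤ ringChar K) (hj : j < n) : (j ! : K) ≠ 0 := by
  rw [Ne, ringChar.spec]
  rcases hchar with h0 | hle
  · simpa [h0] using j.factorial_ne_zero
  · have hp : (ringChar K).Prime := (CharP.char_is_prime_or_zero K _).resolve_right (by omega)
    rw [hp.dvd_factorial]
    omega

namespace Derivation

variable {R : Type*} [CommSemiring R]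

theorem iterate_pow_of_apply_eq_one {A : Type*} [CommRing A] [Algebra R A]
    (d : Derivation R A A) {x : A} (hx : d x = 1) (j r : ℕ) :
    d^[r] (x ^ j) = j.descFactorial r • x ^ (j - r) := by
  induction r with
  | zero => simp
  | succ r ih =>
    rw [iterate_succ_apply', ih, map_nsmul, leibniz_pow, hx, smul_eq_mul, mul_one,
      smul_smul, Nat.descFactorial_succ, mul_comm (j - r), Nat.sub_sub]

variable {K : Type*} [Field K] [Algebra R K] (d : Derivation R K K) {x : K}

/-- In characteristic `p` the constants contain all `p`-th powers, and `K` is infinite since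
otherwise `x` itself would be a `p`-th power. -/
theorem setOf_apply_eq_zero_infinite (hx : d x = 1) : {c : K | d c = 0}.Infinite := by
  obtain ⟨p, hp⟩ := CharP.exists K
  rcases CharP.char_is_prime_or_zero K p with hprime | rfl
  · have : Fact p.Prime := ⟨hprime⟩
    have hpow (y : K) : d (y ^ p) = 0 := by
      rw [leibniz_pow, ← Nat.cast_smul_eq_nsmul K, CharP.cast_eq_zero, zero_smul]
    have : Infinite K := by
      by_contra hfin
      have : Finite K := not_infinite_iff_finite.1 hfin
      obtain ⟨y, rfl⟩ := Finite.injective_iff_surjective.1 (frobenius_inj K p) x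
      simp [frobenius_def, hpow] at hx
    exact Set.infinite_of_injective_forall_mem (frobenius_inj K p) hpow
  · have := CharP.charP_to_charZero K
    exact Set.infinite_of_injective_forall_mem Nat.cast_injective d.map_natCast

theorem eq_zero_of_forall_sum_iterate_mul_eq_zero (hx : d x = 1) {n : ℕ}
    (hn : ∀ j ≤ n, (j ! : K) ≠ 0) {s : ℕ → K}
    (hs : ∀ h : K, ∑ r ∈ range (n + 1), d^[r] h * s r = 0) : ∀ j ≤ n, s j = 0 := by
  intro j
  induction j using Nat.strong_induction_on with
  | _ j ih =>
    intro hj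
    have hsum := hs (x ^ j)
    rw [sum_eq_single_of_mem j (mem_range.2 (by omega)) fun r _ hrj => ?_] at hsum
    · rw [iterate_pow_of_apply_eq_one d hx, Nat.descFactorial_self, Nat.sub_self, pow_zero,
        nsmul_eq_mul, mul_one] at hsum
      exact (mul_eq_zero.1 hsum).resolve_left (hn j hj)
    · rcases lt_or_gt_of_ne hrj with hlt | hgt
      · rw [ih r hlt (by omega), mul_zero]
      · rw [iterate_pow_of_apply_eq_one d hx, Nat.descFactorial_eq_zero_iff_lt.2 hgt, zero_smul,
          zero_mul]

end Derivation

namespace AddMonoidHom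

variable {A M : Type*} [Semiring A] [AddCommMonoid M] [Module A M] (δ : A → A) (D : M →+ M)

theorem iterate_map_smul_eq_sum_choose
    (hD : ∀ (a : A) (m : M), D (a • m) = δ a • m + a • D m) (n : ℕ) (a : A) (m : M) :
    D^[n] (a • m) = ∑ i ∈ Finset.range (n + 1), n.choose i • (δ^[i] a • D^[n - i] m) := by
  induction n with
  | zero => simp
  | succ n ih =>
    rw [sum_choose_succ_nsmul (fun i j => δ^[i] a • D^[j] m) n, iterate_succ_apply', ih, map_sum,
      ← sum_add_distrib]
    refine sum_congr rfl fun i hi => ?_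
    have hin : n + 1 - i = n - i + 1 := by have := Finset.mem_range.1 hi; omega
    rw [map_nsmul, hD, smul_add, add_comm, hin, iterate_succ_apply', iterate_succ_apply']

theorem iterate_map_add_smul_of_eq_zero
    (hD : ∀ (a : A) (m : M), D (a • m) = δ a • m + a • D m) {c : A} (hc : δ c = 0) (n : ℕ)
    (e g : M) : D^[n] (e + c • g) = D^[n] e + c • D^[n] g := by
  have hcomm : Function.Commute D (c • ·) := fun m => by simp [hD, hc]
  rw [iterate_map_add, hcomm.iterate_left n g]

end AddMonoidHom

/-- `t ↦ Φ (a + t • b)` is a polynomial whose linear coefficient is the derivative of `Φ` at `a`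
in the direction `b`. -/
theorem MultilinearMap.linearDeriv_eq_zero_of_infinite {R M ι : Type*} [CommRing R] [IsDomain R]
    [AddCommGroup M] [Module R M] [Fintype ι] [DecidableEq ι]
    (Φ : MultilinearMap R (fun _ : ι => M) R) {a b : ι → M} {S : Set R} (hS : S.Infinite)
    (h : ∀ t ∈ S, Φ (a + t • b) = 0) : Φ.linearDeriv a b = 0 := by
  set P : R[X] := ∑ s : Finset ι, C (Φ (s.piecewise b a)) * X ^ #s
  have heval (t : R) : P.eval t = Φ (a + t • b) := by
    rw [add_comm, map_add_univ, eval_finsetSum]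
    refine sum_congr rfl fun s _ => ?_
    have : s.piecewise (t • b) a =
        s.piecewise (fun i => t • s.piecewise b a i) (s.piecewise b a) := by
      ext i
      by_cases hi : i ∈ s <;> simp [hi]
    rw [this, map_piecewise_smul, prod_const, smul_eq_mul, eval_mul, eval_C, eval_pow, eval_X,
      mul_comm]
  have hP : P = 0 :=
    P.eq_zero_of_infinite_isRoot (hS.mono fun t ht => by simp [IsRoot, heval, h t ht])
  have hcoeff : P.coeff 1 = Φ.linearDeriv a b := by
    have hcard : ({s : Finset ι | 1 = #s} : Finset (Finset ι)) = powersetCard 1 univ := by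
      ext s
      simp [eq_comm]
    simp only [P, finsetSum_coeff, coeff_C_mul_X_pow, linearDeriv_apply]
    rw [← sum_filter, hcard, powersetCard_one, sum_map]
    simp [piecewise_singleton]
  rw [← hcoeff, hP, coeff_zero]

theorem exists_alternatingMap_apply_ne_zero {K M ι : Type*} [Field K] [AddCommGroup M]
    [Module K M] [Fintype ι] [DecidableEq ι] {w : ι → M} (hw : LinearIndependent K w) :
    ∃ Φ : M [⋀^ι]→ₗ[K] K, Φ w ≠ 0 := by
  set W := Submodule.span K (Set.range w)
  obtain ⟨π, hπ⟩ := W.subtype.exists_leftInverse_of_injective W.ker_subtype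
  let b := Basis.span hw
  refine ⟨b.det.compLinearMap π, ?_⟩
  have hπw : (fun i => π (w i)) = b := funext fun i => by
    have : w i = W.subtype (b i) := by simp [b, Module.Basis.span_apply]
    rw [this, ← LinearMap.comp_apply, hπ, LinearMap.id_apply]
  rw [AlternatingMap.compLinearMap_apply, hπw, b.det_self]
  exact one_ne_zero

theorem exists_linearIndependent_iterate_succ {R F M : Type*} [CommSemiring R] [Field F]
    [Algebra R F] [AddCommGroup M] [Module F M] (d : Derivation R F F) (D : M →+ M)
    (hD : ∀ (f : F) (m : M), D (f • m) = d f • m + f • D m) {x : F} (hx : d x = 1) {k : ℕ}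
    (hk : ∀ j ≤ k, (j ! : F) ≠ 0) {e : M} (he : LinearIndependent F fun i : Fin k => D^[i] e)
    (hspan : Submodule.span F (Set.range fun i : Fin k => D^[i] e) ≠ ⊤) :
    ∃ v : M, LinearIndependent F fun i : Fin (k + 1) => D^[i] v := by
  classical
  by_contra! hdep
  obtain ⟨f, hf⟩ := SetLike.exists_not_mem_of_ne_top _ hspan rfl
  set a : Fin (k + 1) → M := fun i => D^[i] e
  have hw : LinearIndependent F (update a (Fin.last k) f) := by
    rw [← Fin.snoc_init_self a, Fin.update_snoc_last]
    exact linearIndependent_finSnoc.2 ⟨he, hf⟩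
  obtain ⟨Φ, hΦ⟩ := exists_alternatingMap_apply_ne_zero hw
  have hderiv (g : M) :
      Φ.toMultilinearMap.linearDeriv a (fun i : Fin (k + 1) => D^[i] g) = 0 :=
    Φ.toMultilinearMap.linearDeriv_eq_zero_of_infinite (d.setOf_apply_eq_zero_infinite hx)
      fun t ht => by
        have : a + t • (fun i : Fin (k + 1) => D^[i] g) =
            fun i : Fin (k + 1) => D^[i] (e + t • g) :=
          funext fun i => (D.iterate_map_add_smul_of_eq_zero d hD ht i e g).symm
        rw [this]
        exact Φ.map_linearDependent _ (hdep _)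
  set g : ℕ → Fin (k + 1) → M := fun r i => (i : ℕ).choose r • D^[i - r] f
  have hsum (h : F) :
      ∑ r ∈ range (k + 1), d^[r] h * Φ.toMultilinearMap.linearDeriv a (g r) = 0 := by
    have : (fun i : Fin (k + 1) => D^[i] (h • f)) = ∑ r ∈ range (k + 1), d^[r] h • g r := by
      funext i
      rw [D.iterate_map_smul_eq_sum_choose _ hD, Finset.sum_apply]
      calc _ = ∑ r ∈ range (i + 1), d^[r] h • g r i := sum_congr rfl fun r _ => smul_comm _ _ _
        _ = _ := sum_subset (range_subset_range.2 (by omega)) fun r _ hr => by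
          simp [g, Nat.choose_eq_zero_of_lt (not_lt.1 (mt mem_range.2 hr))]
    rw [← hderiv (h • f), this, map_sum]
    simp
  have hlast : g k = Pi.single (Fin.last k) f := by
    funext i
    rcases eq_or_ne i (Fin.last k) with rfl | hi
    · simp [g]
    · simp [g, hi, Nat.choose_eq_zero_of_lt (Fin.val_lt_last hi)]
  have hS := d.eq_zero_of_forall_sum_iterate_mul_eq_zero hx hk hsum k le_rfl
  rw [hlast, MultilinearMap.linearDeriv_apply,
    sum_eq_single (Fin.last k) (fun j _ hj => by simp [hj]) (by simp), Pi.single_eq_same] at hS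
  exact hΦ hS

/-- Existence of a cyclic basis for a differential module of dimension μ over a field F
with a derivation admitting an element of derivative 1, provided char F = 0 or μ ≤ char F. -/
theorem stmt_4 {F M : Type*} [Field F] [AddCommGroup M] [Module F M]
    (dd : F → F)
    (hddadd : ∀ f g : F, dd (f + g) = dd f + dd g)
    (hddmul : ∀ f g : F, dd (f * g) = f * dd g + g * dd f)
    (hx : ∃ x : F, dd x = 1)
    (μ : ℕ) [FiniteDimensional F M] (hdim : Module.finrank F M = μ)
    (D : M → M)
    (hDadd : ∀ m m' : M, D (m + m') = D m + D m')
    (hDLeib : ∀ (f : F) (m : M), D (f • m) = dd f • m + f • D m)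
    (hchar : ringChar F = 0 ∨ μ ≤ ringChar F) :
    ∃ m : M, LinearIndependent F (fun i : Fin μ => D^[(i : ℕ)] m) ∧
      Submodule.span F (Set.range fun i : Fin μ => D^[(i : ℕ)] m) = ⊤ := by
  obtain ⟨x, hx⟩ := hx
  let d : Derivation ℤ F F := Derivation.mk' (AddMonoidHom.mk' dd hddadd).toIntLinearMap hddmul
  let D' : M →+ M := AddMonoidHom.mk' D hDadd
  have hcyclic (k : ℕ) (hk : k ≤ μ) : ∃ e : M, LinearIndependent F fun i : Fin k => D^[i] e := by
    induction k with
    | zero => exact ⟨0, linearIndependent_empty_type⟩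
    | succ k ih =>
      obtain ⟨e, he⟩ := ih (by omega)
      have hspan : Submodule.span F (Set.range fun i : Fin k => D^[i] e) ≠ ⊤ := fun htop => by
        have := finrank_span_eq_card he
        rw [htop, finrank_top, hdim, Fintype.card_fin] at this
        omega
      exact exists_linearIndependent_iterate_succ d D' hDLeib hx
        (fun j hj => Nat.cast_factorial_ne_zero_of_lt hchar (by omega)) he hspan
  obtain ⟨e, he⟩ := hcyclic μ le_rfl
  exact ⟨e, he, he.span_eq_top_of_card_eq_finrank' (by rw [Fintype.card_fin, hdim])⟩
end

section
/- Let δ' : R → R be a second derivation with δ∘δ' = δ'∘δ, and let ∇' : M → M be an additive map with ∇'(r·m) = δ'(r)·m + r·∇'(m) for all r ∈ R, m ∈ M, and with ∇∘∇' = ∇'∘∇. Assume M̄ is the direct sum of the generalized eigenspaces of ∇̄. Then every family (M_a)_{a ∈ k} of R-submodules of M such that each M_a is ∇-stable, M is the internal direct sum of the M_a, and the image of M_a in M̄ equals the generalized eigenspace of ∇̄ for the eigenvalue a, satisfies ∇'(M_a) ⊆ M_a for all a ∈ k. -/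
/-!
For `b ≠ a` the map `f = π_b ∘ ∇'` (with `π_b` the projection onto `M_b`) is `R`-linear on `M_a`,
since `π_b` kills the term `δ'(r) • m`, and it commutes with `∇`. Lift `a, b` to `α, β ∈ R`. Then
`∇ - α` is nilpotent on `M_a` modulo `𝔪`, and `∇ - β` is nilpotent on `M_b` modulo `𝔪`; as `δ`
raises the `𝔪`-adic filtration, `∇ - β` stays nilpotent on each graded piece `𝔪ⁿM_b / 𝔪ⁿ⁺¹M_b`,
so `∇ - α = (∇ - β) - (α - β)` is injective there, `α - β` being a unit. By induction
`f(M_a) ⊆ 𝔪ⁿM_b` for every `n`, and Krull's intersection theorem gives `f = 0` on `M_a`.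
-/

open IsLocalRing Submodule DirectSum Set

theorem deriv_mem_pow_succ {R : Type*} [CommRing R] {I : Ideal R} {δ : R → R}
    (hadd : ∀ r s, δ (r + s) = δ r + δ s) (hmul : ∀ r s, δ (r * s) = r * δ s + s * δ r)
    (hR : ∀ r, δ r ∈ I) (hI : ∀ r ∈ I, δ r ∈ I ^ 2) : ∀ n : ℕ, ∀ r ∈ I ^ n, δ r ∈ I ^ (n + 1)
  | 0, r, _ => by simpa using hR r
  | n + 1, r, hr => by
    rw [pow_succ] at hr
    refine Submodule.mul_induction_on hr (fun s hs t ht => ?_) (fun s t hs ht => ?_)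
    · rw [hmul]
      refine add_mem ?_ ?_
      · simpa only [← pow_add] using Ideal.mul_mem_mul hs (hI t ht)
      · simpa only [← pow_succ'] using
          Ideal.mul_mem_mul ht (deriv_mem_pow_succ hadd hmul hR hI n s hs)
    · rw [hadd]
      exact add_mem hs ht

section Connection

variable {R M : Type*} [CommRing R] [AddCommGroup M] [Module R M]

def IsConnection (δ : R → R) (D : Module.End ℤ M) : Prop :=
  ∀ (r : R) (m : M), D (r • m) = δ r • m + r • D m

variable {I : Ideal R} {δ : R → R} {D : Module.End ℤ M} {N : Submodule R M}

theorem mapsTo_pow (hN : MapsTo D N N) (j : ℕ) : MapsTo (D ^ j) N N := by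
  rw [Module.End.coe_pow]
  exact hN.iterate j

theorem mapsTo_sub_smul_one (hN : MapsTo D N N) (c : R) : MapsTo (D - c • 1 : Module.End ℤ M) N N :=
  fun _ hx => sub_mem (hN hx) (N.smul_mem c hx)

theorem pow_apply_comm_of_mapsTo {f S : Module.End ℤ M} {A : Set M} (hA : MapsTo S A A)
    (h : ∀ x ∈ A, f (S x) = S (f x)) (j : ℕ) {x : M} (hx : x ∈ A) :
    f ((S ^ j) x) = (S ^ j) (f x) := by
  induction j with
  | zero => rfl
  | succ j ih =>
    rw [pow_succ', Module.End.mul_apply, Module.End.mul_apply, ← ih,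
      h _ (by rw [Module.End.coe_pow]; exact hA.iterate j hx)]

namespace IsConnection

theorem sub_smul_one (hD : IsConnection δ D) (c : R) : IsConnection δ (D - c • 1) := by
  intro r m
  simp only [LinearMap.sub_apply, LinearMap.smul_apply, Module.End.one_apply, hD r m, smul_sub,
    smul_comm c r m]
  abel

theorem mapsTo_pow_smul (hD : IsConnection δ D)
    (hδ : ∀ n : ℕ, ∀ r ∈ I ^ n, δ r ∈ I ^ (n + 1)) (hN : MapsTo D N N) (n : ℕ) :
    MapsTo D (I ^ n • N : Submodule R M) (I ^ n • N : Submodule R M) := by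
  intro x hx
  refine smul_induction_on hx (fun r hr y hy => ?_) (fun y z hy hz => ?_)
  · rw [hD]
    exact add_mem (smul_mem_smul (Ideal.pow_le_pow_right n.le_succ (hδ n r hr)) hy)
      (smul_mem_smul hr (hN hy))
  · rw [map_add]
    exact add_mem hy hz

theorem pow_apply_smul_sub_mem (hD : IsConnection δ D)
    (hδ : ∀ n : ℕ, ∀ r ∈ I ^ n, δ r ∈ I ^ (n + 1)) (hN : MapsTo D N N) {n : ℕ} {r : R}
    (hr : r ∈ I ^ n) {y : M} (hy : y ∈ N) (j : ℕ) :
    (D ^ j) (r • y) - r • (D ^ j) y ∈ I ^ (n + 1) • N := by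
  induction j with
  | zero => simp
  | succ j ih =>
    have hstep : (D ^ (j + 1)) (r • y) - r • (D ^ (j + 1)) y
        = D ((D ^ j) (r • y) - r • (D ^ j) y) + δ r • (D ^ j) y := by
      rw [pow_succ', Module.End.mul_apply, Module.End.mul_apply, map_sub, hD]
      abel
    rw [hstep]
    exact add_mem (hD.mapsTo_pow_smul hδ hN (n + 1) ih)
      (smul_mem_smul (hδ n r hr) (mapsTo_pow hN j hy))

theorem pow_mem_pow_succ_smul (hD : IsConnection δ D)
    (hδ : ∀ n : ℕ, ∀ r ∈ I ^ n, δ r ∈ I ^ (n + 1)) (hN : MapsTo D N N) {d : ℕ}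
    (hnil : ∀ y ∈ N, (D ^ d) y ∈ I • N) {n : ℕ} {y : M} (hy : y ∈ I ^ n • N) :
    (D ^ d) y ∈ I ^ (n + 1) • N := by
  refine smul_induction_on hy (fun r hr z hz => ?_) (fun z w hz hw => ?_)
  · rw [← sub_add_cancel ((D ^ d) (r • z)) (r • (D ^ d) z)]
    refine add_mem (hD.pow_apply_smul_sub_mem hδ hN hr hz d) ?_
    rw [pow_succ, Submodule.mul_smul]
    exact smul_mem_smul hr (hnil z hz)
  · rw [map_add]
    exact add_mem hz hw

theorem pow_apply_sub_pow_smul_mem (hD : IsConnection δ D)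
    (hδ : ∀ n : ℕ, ∀ r ∈ I ^ n, δ r ∈ I ^ (n + 1)) (hN : MapsTo D N N) {n : ℕ} {u : R} {y : M}
    (hy : y ∈ I ^ n • N) (h : D y - u • y ∈ I ^ (n + 1) • N) (j : ℕ) :
    (D ^ j) y - u ^ j • y ∈ I ^ (n + 1) • N := by
  induction j with
  | zero => simp
  | succ j ih =>
    have hstep : (D ^ (j + 1)) y - u ^ (j + 1) • y
        = D ((D ^ j) y - u ^ j • y) + δ (u ^ j) • y + u ^ j • (D y - u • y) := by
      rw [pow_succ', Module.End.mul_apply, map_sub, hD, pow_succ, mul_smul, smul_sub]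
      abel
    rw [hstep]
    refine add_mem (add_mem (hD.mapsTo_pow_smul hδ hN (n + 1) ih) ?_) (smul_mem _ _ h)
    rw [pow_succ', Submodule.mul_smul]
    exact smul_mem_smul (by simpa using hδ 0 (u ^ j) (by simp)) hy

theorem mem_pow_succ_smul_of_sub_smul_apply_mem (hD : IsConnection δ D)
    (hδ : ∀ n : ℕ, ∀ r ∈ I ^ n, δ r ∈ I ^ (n + 1)) (hN : MapsTo D N N) {d : ℕ}
    (hnil : ∀ y ∈ N, (D ^ d) y ∈ I • N) {u : R} (hu : IsUnit u) {n : ℕ} {y : M}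
    (hy : y ∈ I ^ n • N) (h : (D - u • 1) y ∈ I ^ (n + 1) • N) : y ∈ I ^ (n + 1) • N := by
  have hpow := hD.pow_apply_sub_pow_smul_mem hδ hN hy (by simpa using h) d
  rw [← smul_mem_iff_of_isUnit _ (hu.pow d), ← sub_sub_cancel ((D ^ d) y) (u ^ d • y)]
  exact sub_mem (hD.pow_mem_pow_succ_smul hδ hN hnil hy) hpow

theorem mem_pow_succ_smul_of_pow_sub_smul_apply_mem (hD : IsConnection δ D)
    (hδ : ∀ n : ℕ, ∀ r ∈ I ^ n, δ r ∈ I ^ (n + 1)) (hN : MapsTo D N N) {d : ℕ}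
    (hnil : ∀ y ∈ N, (D ^ d) y ∈ I • N) {u : R} (hu : IsUnit u) {n : ℕ} (j : ℕ) {y : M}
    (hy : y ∈ I ^ n • N) (h : ((D - u • 1) ^ j) y ∈ I ^ (n + 1) • N) : y ∈ I ^ (n + 1) • N := by
  induction j generalizing y with
  | zero => simpa using h
  | succ j ih =>
    rw [pow_succ _ j, Module.End.mul_apply] at h
    have hy' := (hD.sub_smul_one u).mapsTo_pow_smul hδ (mapsTo_sub_smul_one hN u) n hy
    exact hD.mem_pow_succ_smul_of_sub_smul_apply_mem hδ hN hnil hu hy (ih hy' h)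

theorem map_mem_pow_smul (hD : IsConnection δ D)
    (hδ : ∀ n : ℕ, ∀ r ∈ I ^ n, δ r ∈ I ^ (n + 1)) {A B : Submodule R M}
    (hA : MapsTo D A A) (hB : MapsTo D B B) {α β : R} (hαβ : IsUnit (α - β)) {d e : ℕ}
    (hnilA : ∀ x ∈ A, ((D - α • 1) ^ d) x ∈ I • A) (hnilB : ∀ y ∈ B, ((D - β • 1) ^ e) y ∈ I • B)
    {f : Module.End ℤ M} (hf : MapsTo f A B) (hf_smul : ∀ (r : R), ∀ x ∈ A, f (r • x) = r • f x)
    (hf_comm : ∀ x ∈ A, f (D x) = D (f x)) (n : ℕ) : ∀ x ∈ A, f x ∈ I ^ n • B := by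
  induction n with
  | zero => simpa using fun x hx => hf hx
  | succ n ih =>
    intro x hx
    have hcomm : ∀ x ∈ A, f ((D - α • 1) x) = (D - α • 1) (f x) := fun x hx => by
      simp [hf_comm x hx, hf_smul α x hx]
    have hsmall : ((D - α • 1) ^ d) (f x) ∈ I ^ (n + 1) • B := by
      rw [← pow_apply_comm_of_mapsTo (mapsTo_sub_smul_one hA α) hcomm d hx]
      refine smul_induction_on (hnilA x hx) (fun r hr a ha => ?_) (fun a b ha hb => ?_)
      · rw [hf_smul r a ha, pow_succ', Submodule.mul_smul]
        exact smul_mem_smul hr (ih a ha)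
      · rw [map_add]
        exact add_mem ha hb
    rw [show D - α • 1 = (D - β • 1) - (α - β) • 1 by rw [sub_smul]; abel] at hsmall
    exact (hD.sub_smul_one β).mem_pow_succ_smul_of_pow_sub_smul_apply_mem hδ
      (mapsTo_sub_smul_one hB β) hnilB hαβ d (ih x hx) hsmall

end IsConnection

end Connection

namespace DirectSum

variable {ι R M : Type*} [DecidableEq ι] [CommRing R] [AddCommGroup M] [Module R M]
  (E : ι → Submodule R M) [Decomposition E]

theorem decompose_apply_of_mapsTo {f : Module.End ℤ M} (hf : ∀ i, MapsTo f (E i) (E i))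
    (x : M) (i : ι) : (decompose E (f x) i : M) = f (decompose E x i) := by
  induction x using Decomposition.inductionOn E with
  | zero => simp
  | @homogeneous j x =>
    by_cases hij : j = i
    · subst hij
      rw [decompose_of_mem_same E (hf j x.2), decompose_of_mem_same E x.2]
    · rw [decompose_of_mem_ne E (hf j x.2) hij, decompose_of_mem_ne E x.2 hij, map_zero]
  | add x y hx hy => simp [decompose_add, hx, hy]

theorem mem_smul_of_mem_smul_top {I : Ideal R} {i : ι} {x : M} (hxi : x ∈ E i)
    (hx : x ∈ I • (⊤ : Submodule R M)) : x ∈ I • E i := by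
  rw [← decompose_of_mem_same E hxi]
  refine smul_induction_on (p := fun x => (decompose E x i : M) ∈ I • E i) hx
    (fun r hr y _ => ?_) (fun y z hy hz => ?_)
  · rw [decompose_smul]
    exact smul_mem_smul hr (decompose E y i).2
  · simpa [decompose_add] using add_mem hy hz

theorem mem_of_decompose_eq_zero {i : ι} {x : M} (h : ∀ j ≠ i, decompose E x j = 0) :
    x ∈ E i := by
  have hx : decompose E x = of (fun j => E j) i (decompose E x i) := by
    ext j
    by_cases hj : j = i
    · subst hj
      simp
    · rw [h j hj, of_eq_of_ne _ _ _ hj]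
  rw [← (decompose E).symm_apply_apply x, hx, decompose_symm_of]
  exact (decompose E x i).2

end DirectSum

theorem exists_pow_sub_smul_apply_mem_of_map_mkQ_le {R M : Type*} [CommRing R] [AddCommGroup M]
    [Module R M] {P : Submodule R M} [IsNoetherian R (M ⧸ P)] {D : Module.End ℤ M}
    {g : Module.End R (M ⧸ P)} (hg : ∀ m, g (P.mkQ m) = P.mkQ (D m)) {N : Submodule R M} {γ : R}
    (hN : N.map P.mkQ ≤ ⨆ n : ℕ, LinearMap.ker ((g - γ • LinearMap.id) ^ n)) :
    ∃ d, ∀ x ∈ N, ((D - γ • 1 : Module.End ℤ M) ^ d) x ∈ P := by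
  refine ⟨g.maxGenEigenspaceIndex γ, fun x hx => ?_⟩
  have hsemi : Function.Semiconj P.mkQ ⇑(D - γ • 1 : Module.End ℤ M) ⇑(g - γ • 1) :=
    fun m => by simpa using (hg m).symm
  have hq := hN (mem_map_of_mem hx)
  simp only [← Module.End.one_eq_id, ← Module.End.genEigenspace_nat,
    Module.End.iSup_genEigenspace_eq, Module.End.maxGenEigenspace_eq] at hq
  rw [Module.End.genEigenspace_nat, LinearMap.mem_ker, Module.End.coe_pow,
    ← hsemi.iterate_right] at hq
  rwa [Module.End.coe_pow, ← Submodule.Quotient.mk_eq_zero, ← P.mkQ_apply]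

theorem eq_zero_of_forall_mem_maximalIdeal_pow_smul {R M : Type*} [CommRing R] [IsNoetherianRing R]
    [IsLocalRing R] [AddCommGroup M] [Module R M] [Module.Finite R M] {N : Submodule R M} {x : M}
    (h : ∀ n : ℕ, x ∈ maximalIdeal R ^ n • N) : x = 0 := by
  have hx : x ∈ ⨅ n : ℕ, (maximalIdeal R ^ n • ⊤ : Submodule R M) :=
    mem_iInf _ |>.mpr fun n => smul_mono_right (maximalIdeal R ^ n) (le_top : N ≤ ⊤) (h n)
  rwa [Ideal.iInf_pow_smul_eq_bot_of_isLocalRing _ (maximalIdeal.isMaximal R).ne_top,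
    mem_bot] at hx

theorem IsConnection.decompose_apply_eq_zero {ι R M : Type*} [DecidableEq ι] [CommRing R]
    [IsNoetherianRing R] [IsLocalRing R] [AddCommGroup M] [Module R M] [Module.Finite R M]
    {E : ι → Submodule R M} [Decomposition E] {δ δ' : R → R} {D D' : Module.End ℤ M}
    (hD : IsConnection δ D) (hD' : IsConnection δ' D')
    (hδ : ∀ n : ℕ, ∀ r ∈ maximalIdeal R ^ n, δ r ∈ maximalIdeal R ^ (n + 1))
    (hDE : ∀ i, MapsTo D (E i) (E i)) (hcomm : ∀ m, D (D' m) = D' (D m)) {i j : ι} (hij : i ≠ j)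
    {α β : R} (hαβ : IsUnit (α - β)) {d e : ℕ}
    (hnilα : ∀ x ∈ E i, ((D - α • 1) ^ d) x ∈ maximalIdeal R • E i)
    (hnilβ : ∀ y ∈ E j, ((D - β • 1) ^ e) y ∈ maximalIdeal R • E j) {x : M} (hx : x ∈ E i) :
    decompose E (D' x) j = 0 := by
  let f : Module.End ℤ M :=
    (AddMonoidHom.mk' (fun y => (decompose E (D' y) j : M))
      (by simp [decompose_add])).toIntLinearMap
  have hf_smul (r : R) (y) (hy : y ∈ E i) : f (r • y) = r • f y := by
    simp [f, hD' r y, decompose_add, decompose_smul, DirectSum.smul_apply,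
      decompose_of_mem_ne E hy hij]
  have hf_comm (y) : f (D y) = D (f y) := by
    simp only [f, AddMonoidHom.coe_toIntLinearMap, AddMonoidHom.mk'_apply, ← hcomm]
    exact decompose_apply_of_mapsTo E hDE (D' y) j
  exact Subtype.ext <| eq_zero_of_forall_mem_maximalIdeal_pow_smul fun n =>
    hD.map_mem_pow_smul hδ (hDE i) (hDE j) hαβ hnilα hnilβ (fun y _ => (decompose E (D' y) j).2)
      hf_smul (fun y _ => hf_comm y) n x hx

theorem stmt_6_general {R M : Type*} [CommRing R] [IsNoetherianRing R] [IsLocalRing R]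
    [AddCommGroup M] [Module R M] [Module.Finite R M]
    (δ : R → R)
    (hδadd : ∀ r s : R, δ (r + s) = δ r + δ s)
    (hδmul : ∀ r s : R, δ (r * s) = r * δ s + s * δ r)
    (hδR : ∀ r : R, δ r ∈ IsLocalRing.maximalIdeal R)
    (hδm : ∀ r ∈ IsLocalRing.maximalIdeal R, δ r ∈ IsLocalRing.maximalIdeal R ^ 2)
    (nb : M → M)
    (hnbadd : ∀ m m' : M, nb (m + m') = nb m + nb m')
    (hnbLeib : ∀ (r : R) (m : M), nb (r • m) = δ r • m + r • nb m)
    (δ' : R → R)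
    (nb' : M → M)
    (hnb'add : ∀ m m' : M, nb' (m + m') = nb' m + nb' m')
    (hnb'Leib : ∀ (r : R) (m : M), nb' (r • m) = δ' r • m + r • nb' m)
    (hcomm : ∀ m : M, nb (nb' m) = nb' (nb m))
    (nbar : (M ⧸ (IsLocalRing.maximalIdeal R • ⊤ : Submodule R M)) →ₗ[R]
        M ⧸ (IsLocalRing.maximalIdeal R • ⊤ : Submodule R M))
    (hnbar : ∀ m : M,
      nbar (Submodule.mkQ (IsLocalRing.maximalIdeal R • ⊤ : Submodule R M) m)
        = Submodule.mkQ (IsLocalRing.maximalIdeal R • ⊤ : Submodule R M) (nb m)) :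
    ∀ E : IsLocalRing.ResidueField R → Submodule R M,
      (∀ a, ∀ m ∈ E a, nb m ∈ E a) →
      ((⨆ a, E a) = ⊤ ∧ ∀ a, Disjoint (E a) (⨆ b, ⨆ _ : b ≠ a, E b)) →
      (∀ α : R,
        Submodule.map (Submodule.mkQ (IsLocalRing.maximalIdeal R • ⊤ : Submodule R M))
            (E (IsLocalRing.residue R α))
          = ⨆ n : ℕ, LinearMap.ker ((nbar - α • LinearMap.id) ^ n)) →
      ∀ a, ∀ m ∈ E a, nb' m ∈ E a := by
  classical
  intro E hstab ⟨hsup, hindep⟩ hmap a m hm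
  let D : Module.End ℤ M := (AddMonoidHom.mk' nb hnbadd).toIntLinearMap
  let D' : Module.End ℤ M := (AddMonoidHom.mk' nb' hnb'add).toIntLinearMap
  let _ : Decomposition E := ((isInternal_submodule_iff_iSupIndep_and_iSup_eq_top E).mpr
    ⟨iSupIndep_def.mpr hindep, hsup⟩).chooseDecomposition
  have hDE (a) : MapsTo D (E a) (E a) := hstab a
  have hnil (γ : R) : ∃ d, ∀ x ∈ E (residue R γ),
      ((D - γ • 1 : Module.End ℤ M) ^ d) x ∈ maximalIdeal R • E (residue R γ) := by
    obtain ⟨d, hd⟩ := exists_pow_sub_smul_apply_mem_of_map_mkQ_le (D := D) hnbar (hmap γ).le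
    exact ⟨d, fun x hx => mem_smul_of_mem_smul_top E
      (mapsTo_pow (mapsTo_sub_smul_one (hDE _) γ) d hx) (hd x hx)⟩
  refine mem_of_decompose_eq_zero E fun b hba => ?_
  obtain ⟨α, rfl⟩ := residue_surjective a
  obtain ⟨β, rfl⟩ := residue_surjective b
  obtain ⟨d, hdα⟩ := hnil α
  obtain ⟨e, heβ⟩ := hnil β
  have hαβ : IsUnit (α - β) := by
    rw [← residue_ne_zero_iff_isUnit, map_sub, sub_ne_zero]
    exact hba.symm
  exact IsConnection.decompose_apply_eq_zero (D := D) (D' := D') hnbLeib hnb'Leib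
    (deriv_mem_pow_succ hδadd hδmul hδR hδm) hDE hcomm hba.symm hαβ hdα heβ hm

/-- A second commuting connection ∇' preserves every lift of the generalized-eigenspace
decomposition of the residual endomorphism of ∇. -/
theorem stmt_6 {R M : Type*} [CommRing R] [IsNoetherianRing R] [IsLocalRing R]
    [IsAdicComplete (IsLocalRing.maximalIdeal R) R]
    [AddCommGroup M] [Module R M] [Module.Free R M] [Module.Finite R M]
    (δ : R → R)
    (hδadd : ∀ r s : R, δ (r + s) = δ r + δ s)
    (hδmul : ∀ r s : R, δ (r * s) = r * δ s + s * δ r)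
    (hδR : ∀ r : R, δ r ∈ IsLocalRing.maximalIdeal R)
    (hδm : ∀ r ∈ IsLocalRing.maximalIdeal R, δ r ∈ IsLocalRing.maximalIdeal R ^ 2)
    (nb : M → M)
    (hnbadd : ∀ m m' : M, nb (m + m') = nb m + nb m')
    (hnbLeib : ∀ (r : R) (m : M), nb (r • m) = δ r • m + r • nb m)
    (δ' : R → R)
    (hδ'add : ∀ r s : R, δ' (r + s) = δ' r + δ' s)
    (hδ'mul : ∀ r s : R, δ' (r * s) = r * δ' s + s * δ' r)
    (hδcomm : ∀ r : R, δ (δ' r) = δ' (δ r))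
    (nb' : M → M)
    (hnb'add : ∀ m m' : M, nb' (m + m') = nb' m + nb' m')
    (hnb'Leib : ∀ (r : R) (m : M), nb' (r • m) = δ' r • m + r • nb' m)
    (hcomm : ∀ m : M, nb (nb' m) = nb' (nb m))
    (nbar : (M ⧸ (IsLocalRing.maximalIdeal R • ⊤ : Submodule R M)) →ₗ[R]
        M ⧸ (IsLocalRing.maximalIdeal R • ⊤ : Submodule R M))
    (hnbar : ∀ m : M,
      nbar (Submodule.mkQ (IsLocalRing.maximalIdeal R • ⊤ : Submodule R M) m)
        = Submodule.mkQ (IsLocalRing.maximalIdeal R • ⊤ : Submodule R M) (nb m))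
    (hsplit : (⨆ α : R, ⨆ n : ℕ,
        LinearMap.ker ((nbar - α • LinearMap.id) ^ n)) = ⊤) :
    ∀ E : IsLocalRing.ResidueField R → Submodule R M,
      (∀ a, ∀ m ∈ E a, nb m ∈ E a) →
      ((⨆ a, E a) = ⊤ ∧ ∀ a, Disjoint (E a) (⨆ b, ⨆ _ : b ≠ a, E b)) →
      (∀ α : R,
        Submodule.map (Submodule.mkQ (IsLocalRing.maximalIdeal R • ⊤ : Submodule R M))
            (E (IsLocalRing.residue R α))
          = ⨆ n : ℕ, LinearMap.ker ((nbar - α • LinearMap.id) ^ n)) →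
      ∀ a, ∀ m ∈ E a, nb' m ∈ E a :=
  stmt_6_general δ hδadd hδmul hδR hδm nb hnbadd hnbLeib δ' nb' hnb'add hnb'Leib hcomm nbar hnbar
end

section
/- Let K be a field and let N be a differential module over K((x)) which is regular, i.e., admits a basis in which the matrix of D has all its entries in K[[x]]. Let φ ∈ K((x)) with v(φ) < 0. Then the only element n ∈ N satisfying D(n) = φ·n is n = 0. (There are no nonzero horizontal homomorphisms from the rank-one irregular module L_φ to a regular module.) -/
/-!
In a basis in which `D` has a matrix `C` over `K[[x]]`, the coordinates `f` of a solution of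
`D n = φ • n` satisfy `∂ f + C f = φ f`. Take a coordinate `f j` of minimal order `r`: both `∂ f j`
and `C f` have no terms below `x ^ r`, while `φ f j` has a nonzero coefficient at
`x ^ (v φ + r)` with `v φ + r < r`. Hence all coordinates vanish.
-/

open Matrix

theorem Module.Basis.repr_apply_eq_of_leibniz {ι R M : Type*} [Fintype ι] [CommRing R]
    [AddCommGroup M] [Module R M] (b : Module.Basis ι R M) (dd : R → R) (D : M →+ M)
    (hD : ∀ (f : R) (m : M), D (f • m) = dd f • m + f • D m)
    (C : Matrix ι ι R) (hC : ∀ i, D (b i) = ∑ j, C j i • b j) (n : M) (j : ι) :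
    b.repr (D n) j = dd (b.repr n j) + (C *ᵥ ⇑(b.repr n)) j := by
  have hDn : D n = ∑ j, (dd (b.repr n j) + (C *ᵥ ⇑(b.repr n)) j) • b j := by
    conv_lhs => rw [← b.sum_repr n]
    simp only [map_sum, hD, hC, Finset.smul_sum, smul_smul, add_smul, Finset.sum_add_distrib,
      mulVec, dotProduct, Finset.sum_smul]
    rw [Finset.sum_comm]
    simp only [mul_comm]
  rw [hDn, b.repr_sum_self]

namespace HahnSeries

variable {Γ R : Type*} [AddCancelCommMonoid Γ] [LinearOrder Γ] [IsOrderedCancelAddMonoid Γ]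
  [Ring R] [IsDomain R] {ι : Type*} [Fintype ι]

theorem le_orderTop_mulVec {C : Matrix ι ι R⟦Γ⟧} (hC : ∀ i j, 0 ≤ (C i j).orderTop)
    {f : ι → R⟦Γ⟧} {r : WithTop Γ} (hf : ∀ i, r ≤ (f i).orderTop) (j : ι) :
    r ≤ ((C *ᵥ f) j).orderTop := by
  rw [← addVal_apply]
  refine AddValuation.map_le_sum _ fun i _ => ?_
  rw [AddValuation.map_mul, addVal_apply, addVal_apply]
  simpa using add_le_add (hC j i) (hf i)

theorem eq_zero_of_add_mulVec_eq_mul_of_order_neg (dd : R⟦Γ⟧ → R⟦Γ⟧)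
    (hdd : ∀ (x : R⟦Γ⟧) (g : Γ), x.coeff g = 0 → (dd x).coeff g = 0)
    {C : Matrix ι ι R⟦Γ⟧} (hC : ∀ i j, 0 ≤ (C i j).orderTop)
    {φ : R⟦Γ⟧} (hφ : φ.order < 0) {f : ι → R⟦Γ⟧} (hf : ∀ j, dd (f j) + (C *ᵥ f) j = φ * f j) :
    f = 0 := by
  by_contra hf0
  obtain ⟨i₀, hi₀⟩ := Function.ne_iff.mp hf0
  obtain ⟨j, -, hj⟩ :=
    Finset.univ.exists_min_image (fun i => (f i).orderTop) ⟨i₀, Finset.mem_univ _⟩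
  have hfj : f j ≠ 0 := by
    rw [← orderTop_ne_top]
    exact ((hj i₀ (Finset.mem_univ _)).trans_lt (orderTop_ne_top.2 hi₀).lt_top).ne
  have hφ0 : φ ≠ 0 := by
    rintro rfl
    simp at hφ
  have hmin : ∀ i, ((f j).order : WithTop Γ) ≤ (f i).orderTop := fun i => by
    rw [order_eq_orderTop_of_ne_zero hfj]
    exact hj i (Finset.mem_univ i)
  set m := φ.order + (f j).order
  have hm : m < (f j).order := add_lt_of_neg_left _ hφ
  have hlhs : (dd (f j) + (C *ᵥ f) j).coeff m = 0 := by
    rw [coeff_add, hdd _ _ (coeff_eq_zero_of_lt_order hm), zero_add]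
    exact coeff_eq_zero_of_lt_orderTop
      ((WithTop.coe_lt_coe.2 hm).trans_le (le_orderTop_mulVec hC hmin j))
  have hrhs : (φ * f j).coeff m ≠ 0 := by
    rw [coeff_mul_order_add_order]
    exact mul_ne_zero (leadingCoeff_ne_zero.2 hφ0) (leadingCoeff_ne_zero.2 hfj)
  exact hrhs (hf j ▸ hlhs)

end HahnSeries

/-- No nonzero horizontal element of a regular differential module satisfies D n = φ·n
with v(φ) < 0: Hom_∇(L_φ, regular) = 0 for irregular rank-one L_φ. -/
theorem stmt_9 {K : Type*} [Field K]
    (dd : LaurentSeries K → LaurentSeries K)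
    (hdd : ∀ (f : LaurentSeries K) (n : ℤ), (dd f).coeff n = n • f.coeff n)
    {N : Type*} [AddCommGroup N] [Module (LaurentSeries K) N]
    (D : N → N)
    (hDadd : ∀ m m' : N, D (m + m') = D m + D m')
    (hDLeib : ∀ (f : LaurentSeries K) (m : N), D (f • m) = dd f • m + f • D m)
    (hreg : ∃ (ν : ℕ) (b : Module.Basis (Fin ν) (LaurentSeries K) N)
      (C : Matrix (Fin ν) (Fin ν) (LaurentSeries K)),
      (∀ (i j : Fin ν) (m : ℤ), m < 0 → (C i j).coeff m = 0) ∧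
      ∀ i : Fin ν, D (b i) = ∑ j : Fin ν, C j i • b j)
    (φ : LaurentSeries K) (hφ : φ.order < 0) :
    ∀ n : N, D n = φ • n → n = 0 := by
  intro n hn
  obtain ⟨ν, b, C, hC, hDb⟩ := hreg
  have hcoord (j : Fin ν) : dd (b.repr n j) + (C *ᵥ ⇑(b.repr n)) j = φ * b.repr n j := by
    rw [← b.repr_apply_eq_of_leibniz dd (AddMonoidHom.mk' D hDadd) hDLeib C hDb]
    simp [hn]
  have hrepr : ⇑(b.repr n) = 0 :=
    HahnSeries.eq_zero_of_add_mulVec_eq_mul_of_order_neg dd (fun x g hx => by simp [hdd, hx])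
      (fun i j => HahnSeries.le_orderTop_iff_forall.2 fun m hm => hC i j m (by exact_mod_cast hm))
      hφ hcoord
  exact b.repr.map_eq_zero_iff.mp (DFunLike.coe_injective hrepr)
end

section
/- (Deligne's lattice lemma.) Let A be a discrete valuation ring with fraction field K and residue field k. Let M be a free A((x))-module of finite rank, let 𝕄 ⊆ M be the free A[[x]]-submodule generated by an A((x))-basis of M, and let N be a finitely generated A[[x]]-submodule of M with 𝕄 ⊆ N and x^s·N ⊆ 𝕄 for some s ∈ ℕ. Let q : M → M_k := k((x)) ⊗_{A((x))} M be the natural map induced by the coefficientwise reduction A((x)) → k((x)). Then the K-vector space (N/𝕄) ⊗_A K and the k-vector space q(N)/q(𝕄) are finite-dimensional, and dim_K((N/𝕄) ⊗_A K) ≥ dim_k(q(N)/q(𝕄)). -/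
/-!
Reading off the coefficients of `x^(-s), …, x^(-1)` of the coordinates embeds `N/𝕄` `A`-linearly
into a finite free `A`-module; over the discrete valuation ring `A` it is therefore free of some
finite rank `r`, which is the dimension of the generic fibre. Lifting an `A`-basis of `N/𝕄` to `N`
gives `r` vectors whose images under `q` span `q(N)` modulo `q(𝕄)`, since `q` intertwines the action
of `a ∈ A` with that of its residue class. Hence the special fibre has dimension at most `r`.
-/

open TensorProduct
open scoped PowerSeries LaurentSeries

namespace LaurentSeries

variable {R : Type*} [CommSemiring R]

theorem mem_range_algebraMap_powerSeries_iff (f : R⸨X⸩) :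
    f ∈ Set.range (algebraMap R⟦X⟧ R⸨X⸩) ↔ ∀ d < 0, f.coeff d = 0 := by
  refine ⟨?_, fun h => ⟨PowerSeries.mk fun n => f.coeff n, ?_⟩⟩
  · rintro ⟨g, rfl⟩ d hd
    rw [coe_algebraMap, PowerSeries.coeff_coe, if_pos hd]
  · ext d
    rw [coe_algebraMap, PowerSeries.coeff_coe]
    split_ifs with hd
    · exact (h d hd).symm
    · rw [PowerSeries.coeff_mk, Int.natAbs_of_nonneg (not_lt.mp hd)]

instance : FaithfulSMul R⟦X⟧ R⸨X⸩ :=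
  (faithfulSMul_iff_algebraMap_injective _ _).mpr HahnSeries.ofPowerSeries_injective

end LaurentSeries

namespace Submodule

section RestrictScalarsLiftQ

variable {R S X Y : Type*} [CommSemiring R] [Ring S] [Algebra R S] [AddCommGroup X] [Module S X]
  [AddCommGroup Y] [Module R Y] (P : Submodule S X) (f : X →+ Y)

def restrictScalarsLiftQ (hP : ∀ x ∈ P, f x = 0)
    (hf : ∀ (r : R) x, f (algebraMap R S r • x) = r • f x) :
    RestrictScalars R S (X ⧸ P) →ₗ[R] Y where
  toFun y := Quotient.liftOn' (RestrictScalars.addEquiv R S (X ⧸ P) y) f fun a b hab => by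
    rw [← sub_eq_zero, ← map_sub]
    exact hP _ ((quotientRel_def P).mp hab)
  map_add' y z := by
    obtain ⟨a, ha⟩ := Quotient.mk_surjective P (RestrictScalars.addEquiv R S (X ⧸ P) y)
    obtain ⟨b, hb⟩ := Quotient.mk_surjective P (RestrictScalars.addEquiv R S (X ⧸ P) z)
    rw [map_add, ← ha, ← hb, ← Quotient.mk_add]
    exact map_add f a b
  map_smul' r y := by
    obtain ⟨x, hx⟩ := Quotient.mk_surjective P (RestrictScalars.addEquiv R S (X ⧸ P) y)
    rw [RingHom.id_apply, RestrictScalars.addEquiv_map_smul, ← hx, ← Quotient.mk_smul]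
    exact hf r x

theorem restrictScalarsLiftQ_injective (hP : ∀ x ∈ P, f x = 0)
    (hf : ∀ (r : R) x, f (algebraMap R S r • x) = r • f x) (hker : ∀ x, f x = 0 → x ∈ P) :
    Function.Injective (P.restrictScalarsLiftQ f hP hf) := by
  rw [injective_iff_map_eq_zero]
  intro y hy
  obtain ⟨x, hx⟩ := Submodule.Quotient.mk_surjective P (RestrictScalars.addEquiv R S (X ⧸ P) y)
  rw [← (RestrictScalars.addEquiv R S _).map_eq_zero_iff, ← hx, Submodule.Quotient.mk_eq_zero]
  refine hker x ?_
  change Quotient.liftOn' (RestrictScalars.addEquiv R S (X ⧸ P) y) f _ = 0 at hy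
  rwa [← hx] at hy

end RestrictScalarsLiftQ

theorem exists_sub_sum_mem_of_basis {R S X : Type*} [CommSemiring R] [Ring S] [Algebra R S]
    [AddCommGroup X] [Module S X] (N P : Submodule S X) {ι : Type*} [Fintype ι]
    (c : Module.Basis ι R (RestrictScalars R S (N ⧸ P.comap N.subtype))) :
    ∃ x : ι → X, ∀ n ∈ N, ∃ a : ι → R, n - ∑ i, algebraMap R S (a i) • x i ∈ P := by
  set e := RestrictScalars.addEquiv R S (N ⧸ P.comap N.subtype) with he
  choose x hx using fun i => Quotient.mk_surjective _ (e (c i))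
  refine ⟨fun i => x i, fun n hn => ⟨fun i => c.repr (e.symm (Quotient.mk ⟨n, hn⟩)) i, ?_⟩⟩
  have hsum := congrArg e (c.sum_repr (e.symm (Quotient.mk ⟨n, hn⟩)))
  rw [e.apply_symm_apply, map_sum] at hsum
  simp_rw [he, RestrictScalars.addEquiv_map_smul, ← he, ← hx, ← mkQ_apply, ← map_smul,
    ← map_sum, mkQ_apply, Quotient.eq] at hsum
  rw [← neg_mem_iff, neg_sub, mem_comap] at hsum
  simpa using hsum

theorem span_image_le_sup_span_range {R S X k V : Type*} [CommSemiring R] [Ring S] [Algebra R S]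
    [AddCommGroup X] [Module S X] [Semiring k] [AddCommGroup V] [Module k V] (σ : R → k)
    (q : X →+ V) (hq : ∀ (r : R) x, q (algebraMap R S r • x) = σ r • q x) {N P : Submodule S X}
    {ι : Type*} [Fintype ι] (x : ι → X)
    (hx : ∀ n ∈ N, ∃ a : ι → R, n - ∑ i, algebraMap R S (a i) • x i ∈ P) :
    span k (q '' N) ≤ span k (q '' P) ⊔ span k (Set.range (q ∘ x)) := by
  rw [span_le]
  rintro _ ⟨n, hn, rfl⟩
  obtain ⟨a, ha⟩ := hx n hn
  have hqn : q n = q (n - ∑ i, algebraMap R S (a i) • x i) + ∑ i, σ (a i) • q (x i) := by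
    simp only [map_sub, map_sum, hq, sub_add_cancel]
  rw [SetLike.mem_coe, hqn]
  exact add_mem (mem_sup_left (subset_span ⟨_, ha, rfl⟩))
    (mem_sup_right (sum_mem fun i _ => smul_mem _ _ (subset_span ⟨i, rfl⟩)))

variable {K V : Type*} [Field K] [AddCommGroup V] [Module K V] {W U : Submodule K V} {ι : Type*}
  {v : ι → V}

theorem exists_injective_quotient_comap_subtype (h : W ≤ U ⊔ span K (Set.range v)) :
    ∃ g : (W ⧸ U.comap W.subtype) →ₗ[K] span K (Set.range (U.mkQ ∘ v)), Function.Injective g := by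
  refine ⟨LinearMap.codRestrict _ ((U.comap W.subtype).mapQ U W.subtype le_rfl) fun y => ?_, ?_⟩
  · obtain ⟨w, rfl⟩ := Submodule.Quotient.mk_surjective _ y
    have := mem_map_of_mem (f := U.mkQ) (h w.2)
    rwa [map_sup, mkQ_map_self, bot_sup_eq, map_span, ← Set.range_comp] at this
  · rw [← LinearMap.ker_eq_bot, LinearMap.ker_codRestrict, ker_mapQ, mkQ_map_self]

theorem finiteDimensional_quotient_comap_subtype [Finite ι] (h : W ≤ U ⊔ span K (Set.range v)) :
    FiniteDimensional K (W ⧸ U.comap W.subtype) := by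
  obtain ⟨g, hg⟩ := exists_injective_quotient_comap_subtype h
  have := FiniteDimensional.span_of_finite K (Set.finite_range (U.mkQ ∘ v))
  exact .of_injective g hg

theorem finrank_quotient_comap_subtype_le [Fintype ι] (h : W ≤ U ⊔ span K (Set.range v)) :
    Module.finrank K (W ⧸ U.comap W.subtype) ≤ Fintype.card ι := by
  obtain ⟨g, hg⟩ := exists_injective_quotient_comap_subtype h
  have := FiniteDimensional.span_of_finite K (Set.finite_range (U.mkQ ∘ v))
  exact (LinearMap.finrank_le_finrank_of_injective hg).trans (finrank_range_le_card _)

end Submodule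

theorem exists_fin_basis_of_injective {R L ι : Type*} [CommRing R] [IsDomain R]
    [IsPrincipalIdealRing R] [AddCommMonoid L] [Module R L] [Finite ι] (f : L →ₗ[R] ι → R)
    (hf : Function.Injective f) : ∃ n, Nonempty (Module.Basis (Fin n) R L) := by
  obtain ⟨n, ⟨c⟩⟩ := (LinearMap.range f).nonempty_basis_of_pid (Pi.basisFun R ι)
  exact ⟨n, ⟨c.map (LinearEquiv.ofInjective f hf).symm⟩⟩

namespace Module.Basis

open LaurentSeries

variable {A : Type*} [CommRing A] {M : Type*} [AddCommGroup M] [Module A⟦X⟧ M] [Module A⸨X⸩ M]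
  [IsScalarTower A⟦X⟧ A⸨X⸩ M] {ι : Type*} (b : Basis ι A⸨X⸩ M) (s : ℕ)

noncomputable def polarPart : M →+ (ι × Fin s → A) where
  toFun m p := (b.repr m p.1).coeff (p.2 - s)
  map_zero' := by ext; simp
  map_add' _ _ := by ext; simp

theorem polarPart_algebraMap_smul (a : A) (m : M) :
    b.polarPart s (algebraMap A A⟦X⟧ a • m) = a • b.polarPart s m := by
  ext p
  change (b.repr _ p.1).coeff _ = a * (b.repr m p.1).coeff _
  rw [← algebraMap_smul A⸨X⸩, map_smul, Finsupp.smul_apply, smul_eq_mul, coe_algebraMap,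
    PowerSeries.algebraMap_apply, Algebra.algebraMap_self, RingHom.id_apply,
    HahnSeries.ofPowerSeries_C, HahnSeries.C_mul_eq_smul, HahnSeries.coeff_smul, smul_eq_mul]

variable [IsDomain A]

theorem mem_span_powerSeries_iff (m : M) :
    m ∈ Submodule.span A⟦X⟧ (Set.range b) ↔ ∀ i, ∀ d < 0, (b.repr m i).coeff d = 0 := by
  simp only [b.mem_span_iff_repr_mem A⟦X⟧, mem_range_algebraMap_powerSeries_iff]

variable {s}

theorem coeff_repr_eq_zero_of_X_pow_smul_mem {m : M}
    (hm : (PowerSeries.X : A⟦X⟧) ^ s • m ∈ Submodule.span A⟦X⟧ (Set.range b)) (i : ι) {d : ℤ}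
    (hd : d < -s) : (b.repr m i).coeff d = 0 := by
  have h := (b.mem_span_powerSeries_iff _).mp hm i (d + s) (by omega)
  rwa [← algebraMap_smul A⸨X⸩, map_smul, Finsupp.smul_apply, smul_eq_mul, map_pow, coe_algebraMap,
    HahnSeries.ofPowerSeries_X, HahnSeries.single_pow, one_pow, nsmul_one,
    HahnSeries.coeff_single_mul_add, one_mul] at h

theorem polarPart_eq_zero_iff {m : M}
    (hm : (PowerSeries.X : A⟦X⟧) ^ s • m ∈ Submodule.span A⟦X⟧ (Set.range b)) :
    b.polarPart s m = 0 ↔ m ∈ Submodule.span A⟦X⟧ (Set.range b) := by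
  rw [b.mem_span_powerSeries_iff, funext_iff]
  refine ⟨fun h i d hd => ?_, fun h p => h p.1 _ (by omega)⟩
  by_cases hds : d < -s
  · exact b.coeff_repr_eq_zero_of_X_pow_smul_mem hm i hds
  · have := h (i, ⟨(d + s).toNat, by omega⟩)
    rwa [polarPart, AddMonoidHom.coe_mk, ZeroHom.coe_mk, show ((d + s).toNat : ℤ) - s = d by omega]
      at this

variable {N : Submodule A⟦X⟧ M}
  (hN : ∀ v ∈ N, (PowerSeries.X : A⟦X⟧) ^ s • v ∈ Submodule.span A⟦X⟧ (Set.range b))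

noncomputable def quotientPolarPart :
    RestrictScalars A A⟦X⟧ (N ⧸ (Submodule.span A⟦X⟧ (Set.range b)).comap N.subtype) →ₗ[A]
      (ι × Fin s → A) :=
  Submodule.restrictScalarsLiftQ _ ((b.polarPart s).comp N.subtype.toAddMonoidHom)
    (fun v hv => (b.polarPart_eq_zero_iff (hN v v.2)).mpr hv)
    (fun a v => b.polarPart_algebraMap_smul s a v)

theorem quotientPolarPart_injective : Function.Injective (b.quotientPolarPart hN) :=
  Submodule.restrictScalarsLiftQ_injective _ _ _ _
    (fun v hv => (b.polarPart_eq_zero_iff (hN v v.2)).mp hv)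

end Module.Basis

theorem stmt_14_general {A : Type*} [CommRing A] [IsDomain A] [IsDiscreteValuationRing A]
    {M : Type*} [AddCommGroup M] [Module (PowerSeries A) M] [Module (LaurentSeries A) M]
    [IsScalarTower (PowerSeries A) (LaurentSeries A) M]
    (μ : ℕ) (b : Module.Basis (Fin μ) (LaurentSeries A) M)
    (N : Submodule (PowerSeries A) M)
    (s : ℕ)
    (hxs : ∀ v ∈ N, (PowerSeries.X : PowerSeries A) ^ s • v ∈
      Submodule.span (PowerSeries A) (Set.range b))
    (ψ : LaurentSeries A → LaurentSeries (IsLocalRing.ResidueField A))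
    (hψ : ∀ (g : LaurentSeries A) (n : ℤ), (ψ g).coeff n = IsLocalRing.residue A (g.coeff n))
    {Mk : Type*} [AddCommGroup Mk]
    [Module (LaurentSeries (IsLocalRing.ResidueField A)) Mk]
    [Module (IsLocalRing.ResidueField A) Mk]
    [IsScalarTower (IsLocalRing.ResidueField A)
      (LaurentSeries (IsLocalRing.ResidueField A)) Mk]
    (q : M → Mk)
    (hqadd : ∀ m m' : M, q (m + m') = q m + q m')
    (hqsl : ∀ (g : LaurentSeries A) (m : M), q (g • m) = ψ g • q m) :
    FiniteDimensional (FractionRing A)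
      ((FractionRing A) ⊗[A] (RestrictScalars A (PowerSeries A)
        (↥N ⧸ Submodule.comap N.subtype
          (Submodule.span (PowerSeries A) (Set.range b))))) ∧
    FiniteDimensional (IsLocalRing.ResidueField A)
      (↥(Submodule.span (IsLocalRing.ResidueField A) (q '' (N : Set M))) ⧸
        Submodule.comap
          (Submodule.span (IsLocalRing.ResidueField A) (q '' (N : Set M))).subtype
          (Submodule.span (IsLocalRing.ResidueField A)
            (q '' ((Submodule.span (PowerSeries A) (Set.range b) : Submodule (PowerSeries A) M)
              : Set M)))) ∧
    Module.finrank (IsLocalRing.ResidueField A)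
      (↥(Submodule.span (IsLocalRing.ResidueField A) (q '' (N : Set M))) ⧸
        Submodule.comap
          (Submodule.span (IsLocalRing.ResidueField A) (q '' (N : Set M))).subtype
          (Submodule.span (IsLocalRing.ResidueField A)
            (q '' ((Submodule.span (PowerSeries A) (Set.range b) : Submodule (PowerSeries A) M)
              : Set M))))
      ≤ Module.finrank (FractionRing A)
        ((FractionRing A) ⊗[A] (RestrictScalars A (PowerSeries A)
          (↥N ⧸ Submodule.comap N.subtype
            (Submodule.span (PowerSeries A) (Set.range b))))) := by
  obtain ⟨n, ⟨c⟩⟩ := exists_fin_basis_of_injective _ (b.quotientPolarPart_injective hxs)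
  have := Module.Free.of_basis c
  have := Module.Finite.of_basis c
  obtain ⟨x, hx⟩ := Submodule.exists_sub_sum_mem_of_basis N _ c
  have hq : ∀ (a : A) (m : M),
      q (algebraMap A (PowerSeries A) a • m) = IsLocalRing.residue A a • q m := by
    intro a m
    have hψC : ψ (algebraMap (PowerSeries A) (LaurentSeries A) (algebraMap A (PowerSeries A) a)) =
        IsLocalRing.residue A a • (1 : LaurentSeries (IsLocalRing.ResidueField A)) := by
      ext n
      rw [hψ, LaurentSeries.coe_algebraMap, PowerSeries.algebraMap_apply, Algebra.algebraMap_self,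
        RingHom.id_apply, HahnSeries.ofPowerSeries_C, HahnSeries.C_apply, HahnSeries.coeff_single,
        HahnSeries.coeff_smul, HahnSeries.coeff_one]
      split_ifs <;> simp
    rw [← algebraMap_smul (LaurentSeries A), hqsl, hψC, smul_one_smul]
  have hspan := Submodule.span_image_le_sup_span_range (k := IsLocalRing.ResidueField A) _
    (AddMonoidHom.mk' q hqadd) hq x hx
  simp only [AddMonoidHom.mk'_apply] at hspan
  refine ⟨inferInstance, Submodule.finiteDimensional_quotient_comap_subtype hspan,
    (Submodule.finrank_quotient_comap_subtype_le hspan).trans_eq ?_⟩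
  rw [Module.finrank_baseChange, Module.finrank_eq_card_basis c]

/-- Deligne's lattice lemma: for lattices 𝕄 ⊆ N in a free A((x))-module M with x^s·N ⊆ 𝕄,
the generic fiber dimension of N/𝕄 bounds the special fiber dimension of q(N)/q(𝕄). -/
theorem stmt_14 {A : Type*} [CommRing A] [IsDomain A] [IsDiscreteValuationRing A]
    {M : Type*} [AddCommGroup M] [Module (PowerSeries A) M] [Module (LaurentSeries A) M]
    [IsScalarTower (PowerSeries A) (LaurentSeries A) M]
    (μ : ℕ) (b : Module.Basis (Fin μ) (LaurentSeries A) M)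
    (N : Submodule (PowerSeries A) M)
    (hMN : Submodule.span (PowerSeries A) (Set.range b) ≤ N)
    (hNfg : N.FG)
    (s : ℕ)
    (hxs : ∀ v ∈ N, (PowerSeries.X : PowerSeries A) ^ s • v ∈
      Submodule.span (PowerSeries A) (Set.range b))
    (ψ : LaurentSeries A → LaurentSeries (IsLocalRing.ResidueField A))
    (hψ : ∀ (g : LaurentSeries A) (n : ℤ), (ψ g).coeff n = IsLocalRing.residue A (g.coeff n))
    {Mk : Type*} [AddCommGroup Mk]
    [Module (LaurentSeries (IsLocalRing.ResidueField A)) Mk]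
    [Module (IsLocalRing.ResidueField A) Mk]
    [IsScalarTower (IsLocalRing.ResidueField A)
      (LaurentSeries (IsLocalRing.ResidueField A)) Mk]
    (q : M → Mk)
    (hqadd : ∀ m m' : M, q (m + m') = q m + q m')
    (hqsl : ∀ (g : LaurentSeries A) (m : M), q (g • m) = ψ g • q m)
    (bk : Module.Basis (Fin μ) (LaurentSeries (IsLocalRing.ResidueField A)) Mk)
    (hbk : ∀ i : Fin μ, bk i = q (b i)) :
    FiniteDimensional (FractionRing A)
      ((FractionRing A) ⊗[A] (RestrictScalars A (PowerSeries A)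
        (↥N ⧸ Submodule.comap N.subtype
          (Submodule.span (PowerSeries A) (Set.range b))))) ∧
    FiniteDimensional (IsLocalRing.ResidueField A)
      (↥(Submodule.span (IsLocalRing.ResidueField A) (q '' (N : Set M))) ⧸
        Submodule.comap
          (Submodule.span (IsLocalRing.ResidueField A) (q '' (N : Set M))).subtype
          (Submodule.span (IsLocalRing.ResidueField A)
            (q '' ((Submodule.span (PowerSeries A) (Set.range b) : Submodule (PowerSeries A) M)
              : Set M)))) ∧
    Module.finrank (IsLocalRing.ResidueField A)
      (↥(Submodule.span (IsLocalRing.ResidueField A) (q '' (N : Set M))) ⧸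
        Submodule.comap
          (Submodule.span (IsLocalRing.ResidueField A) (q '' (N : Set M))).subtype
          (Submodule.span (IsLocalRing.ResidueField A)
            (q '' ((Submodule.span (PowerSeries A) (Set.range b) : Submodule (PowerSeries A) M)
              : Set M))))
      ≤ Module.finrank (FractionRing A)
        ((FractionRing A) ⊗[A] (RestrictScalars A (PowerSeries A)
          (↥N ⧸ Submodule.comap N.subtype
            (Submodule.span (PowerSeries A) (Set.range b))))) :=
  stmt_14_general μ b N s hxs ψ hψ q hqadd hqsl
end

section
/- Let k be a field of characteristic 0. In the field k((y₂))((y₁)) of formal Laurent series in y₁ with coefficients in k((y₂)), let ε be the element whose y₁-coefficient of index n+1 equals (−1)^n·n!·y₂^{−(n+1)} for every n ≥ 0, and whose other coefficients are 0 (the Euler series ε = Σ_{n≥0} (−1)^n n! y₁^{n+1} y₂^{−(n+1)}). Let j : k[[y₂]][[y₁]] → k((y₂))((y₁)) be the canonical embedding of the iterated formal power series ring (i.e., of k[[y₁,y₂]]). Then there exist no N ∈ ℕ and F ∈ k[[y₂]][[y₁]] with y₁^N·y₂^N·ε = j(F); that is, ε does not lie in the image of k[[y₁,y₂]][1/(y₁y₂)]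 in k((y₂))((y₁)). -/
/-!
Multiplying by `(y₁y₂)^N` only shifts exponents, so the `y₁^(2N+1)`-coefficient of
`y₁^N y₂^N ε` is `(-1)^N N! y₂⁻¹`. No coefficient of an element of `k[[y₂]][[y₁]]` has a
negative power of `y₂`, and `(-1)^N N! ≠ 0` in characteristic zero.
-/

open HahnSeries

theorem HahnSeries.coeff_single_one_pow_mul_single_zero_pow_mul {R : Type*} [Semiring R]
    (c : R) (x : HahnSeries ℤ R) (N : ℕ) (b : ℤ) :
    ((single 1 (1 : R)) ^ N * (single 0 c) ^ N * x).coeff (b + N) = c ^ N * x.coeff b := by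
  rw [single_pow, single_pow, single_mul_single, one_pow, one_mul, nsmul_one, nsmul_zero,
    add_zero, coeff_single_mul_add]

theorem LaurentSeries.coeff_coeff_coe_map_coe_of_neg {R : Type*} [Semiring R]
    (F : PowerSeries (PowerSeries R)) (n : ℤ) {m : ℤ} (hm : m < 0) :
    ((ofPowerSeries ℤ (LaurentSeries R) (PowerSeries.map (ofPowerSeries ℤ R) F)).coeff n).coeff m
      = 0 := by
  rw [PowerSeries.coeff_coe]
  split_ifs
  · rfl
  · rw [PowerSeries.coeff_map, PowerSeries.coeff_coe, if_pos hm]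

theorem stmt_16_general {k : Type*} [Field k] [CharZero k]
    (ε : LaurentSeries (LaurentSeries k))
    (hε : ∀ n : ℕ, ε.coeff ((n : ℤ) + 1) =
      (((-1 : ℤ) ^ n * (n.factorial : ℤ))) • (HahnSeries.single (-((n : ℤ) + 1)) (1 : k))) :
    ¬ ∃ (N : ℕ) (F : PowerSeries (PowerSeries k)),
      (HahnSeries.single (1 : ℤ) (1 : LaurentSeries k)) ^ N *
        (HahnSeries.single (0 : ℤ) (HahnSeries.single (1 : ℤ) (1 : k))) ^ N * ε =
      HahnSeries.ofPowerSeries ℤ (LaurentSeries k)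
        (PowerSeries.map (HahnSeries.ofPowerSeries ℤ k) F) := by
  rintro ⟨N, F, h⟩
  have hcoeff := congrArg (fun x => (x.coeff ((N + 1 : ℤ) + N)).coeff (-1)) h
  rw [coeff_single_one_pow_mul_single_zero_pow_mul, hε,
    LaurentSeries.coeff_coeff_coe_map_coe_of_neg F _ (by norm_num)] at hcoeff
  rw [single_pow, one_pow, mul_smul_comm, single_mul_single, one_mul,
    show N • (1 : ℤ) + -(N + 1) = -1 by simp, coeff_smul, coeff_single_same, zsmul_one,
    Int.cast_eq_zero] at hcoeff
  have hN : ((-1 : ℤ) ^ N * N.factorial : ℤ) ≠ 0 := by positivity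
  exact hN hcoeff

/-- The Euler series ε = Σ_{n≥0} (−1)^n n! y₁^{n+1} y₂^{−(n+1)} ∈ k((y₂))((y₁)) does not lie
in the image of k[[y₁,y₂]][1/(y₁y₂)]. -/
theorem stmt_16 {k : Type*} [Field k] [CharZero k]
    (ε : LaurentSeries (LaurentSeries k))
    (hε : ∀ n : ℕ, ε.coeff ((n : ℤ) + 1) =
      (((-1 : ℤ) ^ n * (n.factorial : ℤ))) • (HahnSeries.single (-((n : ℤ) + 1)) (1 : k)))
    (hε0 : ∀ m : ℤ, m ≤ 0 → ε.coeff m = 0) :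
    ¬ ∃ (N : ℕ) (F : PowerSeries (PowerSeries k)),
      (HahnSeries.single (1 : ℤ) (1 : LaurentSeries k)) ^ N *
        (HahnSeries.single (0 : ℤ) (HahnSeries.single (1 : ℤ) (1 : k))) ^ N * ε =
      HahnSeries.ofPowerSeries ℤ (LaurentSeries k)
        (PowerSeries.map (HahnSeries.ofPowerSeries ℤ k) F) :=
  stmt_16_general ε hε
end
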